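/- arXiv:1111.1996 — 9 statements merged into one kernel-verified Lean document; each statement's English description precedes it below -/
import Mathlib

section
/- Let K be a complete non-Archimedean valued field of characteristic p > 0, and λ ∈ K with |λ| = 1. Suppose m = min{n ≥ 1 : |1 - λ^n| < 1} exists. Then for every n ≥ 1: if m does not divide n, then |1 - λ^n| = 1; and if n = m·a·p^j with p not dividing a, then |1 - λ^n| = |1 - λ^m|^{p^j}. -/
/-!
Write `x = λ ^ m`, so `‖1 - x‖ < 1`. For `0 < r < m`, minimality and the ultrametric inequality
give `‖1 - λ ^ r‖ = 1`, while `(1 - λ ^ n) - (1 - λ ^ (n % m)) = λ ^ (n % m) (1 - x ^ (n / m))` has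
norm `< 1`; so `‖1 - λ ^ n‖ = 1` when `m ∤ n`. If `p ∤ a`, then `1 - x ^ a = (∑_{i<a} x ^ i)(1 - x)`
and the geometric sum is `a` plus terms of norm `< 1`, where `a` is a nonzero element of the prime
field and hence a root of unity of norm `1`; so `‖1 - x ^ a‖ = ‖1 - x‖`. Finally
`1 - x ^ (a p ^ j) = (1 - x ^ a) ^ p ^ j` by the Frobenius.
-/

open Finset IsUltrametricDist

theorem norm_eq_of_norm_sub_lt {E : Type*} [SeminormedAddGroup E] [IsUltrametricDist E] {x y : E}
    (h : ‖x - y‖ < ‖y‖) : ‖x‖ = ‖y‖ := by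
  simpa [max_eq_right h.le] using norm_add_eq_max_of_norm_ne_norm h.ne

section Ultrametric

variable {R : Type*} [NormedRing R] [NormOneClass R] [IsUltrametricDist R] {x : R}

theorem norm_one_sub_le_one_of_norm_le_one (hx : ‖x‖ ≤ 1) : ‖1 - x‖ ≤ 1 := by
  simpa [sub_eq_add_neg] using (norm_add_le_max 1 (-x)).trans (max_le norm_one.le (by simpa))

theorem norm_le_one_of_norm_one_sub_lt_one (hx : ‖1 - x‖ < 1) : ‖x‖ ≤ 1 := by
  simpa using norm_one_sub_le_one_of_norm_le_one hx.le

theorem norm_one_sub_pow_le (hx : ‖x‖ ≤ 1) (k : ℕ) : ‖1 - x ^ k‖ ≤ ‖1 - x‖ := by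
  have hsum : ‖∑ i ∈ range k, x ^ i‖ ≤ 1 :=
    norm_sum_le_of_forall_le_of_nonneg zero_le_one fun i _ =>
      (norm_pow_le x i).trans (pow_le_one₀ (norm_nonneg x) hx)
  calc ‖1 - x ^ k‖ = ‖(∑ i ∈ range k, x ^ i) * (1 - x)‖ := by rw [geom_sum_mul_neg]
    _ ≤ ‖∑ i ∈ range k, x ^ i‖ * ‖1 - x‖ := norm_mul_le _ _
    _ ≤ ‖1 - x‖ := mul_le_of_le_one_left (norm_nonneg _) hsum

theorem norm_geom_sum_eq_one (hx : ‖1 - x‖ < 1) {a : ℕ} (ha : ‖(a : R)‖ = 1) :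
    ‖∑ i ∈ range a, x ^ i‖ = 1 := by
  have hclose : ‖∑ i ∈ range a, x ^ i - a‖ ≤ ‖1 - x‖ := by
    have hterm (i : ℕ) : ‖x ^ i - 1‖ ≤ ‖1 - x‖ := by
      rw [norm_sub_rev]; exact norm_one_sub_pow_le (norm_le_one_of_norm_one_sub_lt_one hx) i
    simpa [sum_sub_distrib] using
      norm_sum_le_of_forall_le_of_nonneg (norm_nonneg _) fun i (_ : i ∈ range a) => hterm i
  rw [norm_eq_of_norm_sub_lt (hclose.trans_lt (ha ▸ hx)), ha]

end Ultrametric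

theorem norm_natCast_eq_one_of_not_dvd {K : Type*} [NormedDivisionRing K] {p : ℕ} (hp : p.Prime)
    [CharP K p] {a : ℕ} (ha : ¬ p ∣ a) : ‖(a : K)‖ = 1 := by
  have := Fact.mk hp
  have hpow : (a : ZMod p) ^ (p - 1) = 1 :=
    ZMod.pow_card_sub_one_eq_one (by rwa [Ne, ZMod.natCast_eq_zero_iff])
  refine IsOfFinOrder.norm_eq_one
    (isOfFinOrder_iff_pow_eq_one.2 ⟨p - 1, Nat.sub_pos_of_lt hp.one_lt, ?_⟩)
  simpa using congrArg (ZMod.castHom dvd_rfl K) hpow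

section DivisionRing

variable {K : Type*} [NormedDivisionRing K] [IsUltrametricDist K] {x : K}

theorem norm_one_sub_pow_eq_of_norm_natCast_eq_one (hx : ‖1 - x‖ < 1) {a : ℕ}
    (ha : ‖(a : K)‖ = 1) : ‖1 - x ^ a‖ = ‖1 - x‖ := by
  rw [← geom_sum_mul_neg, norm_mul, norm_geom_sum_eq_one hx ha, one_mul]

theorem norm_one_sub_pow_eq_norm_one_sub_pow_mod (hx : ‖x‖ = 1) {m n : ℕ}
    (h : ‖1 - x ^ m‖ < ‖1 - x ^ (n % m)‖) : ‖1 - x ^ n‖ = ‖1 - x ^ (n % m)‖ := by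
  have hdiff : (1 - x ^ n) - (1 - x ^ (n % m)) = x ^ (n % m) * (1 - (x ^ m) ^ (n / m)) := by
    have hsplit : x ^ n = x ^ (n % m) * (x ^ m) ^ (n / m) := by
      rw [← pow_mul, ← pow_add, Nat.mod_add_div]
    rw [hsplit]
    noncomm_ring
  refine norm_eq_of_norm_sub_lt (lt_of_le_of_lt ?_ h)
  rw [hdiff, norm_mul, norm_pow, hx, one_pow, one_mul]
  exact norm_one_sub_pow_le (by rw [norm_pow, hx, one_pow]) _

end DivisionRing

theorem norm_one_sub_pow_formula_general {K : Type*} [NontriviallyNormedField K] [IsUltrametricDist K]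
    (p : ℕ) (hp : p.Prime) [CharP K p]
    (lam : K) (hlam : ‖lam‖ = 1) (m : ℕ) (hm1 : 1 ≤ m)
    (hm2 : ‖1 - lam ^ m‖ < 1)
    (hmin : ∀ n : ℕ, 1 ≤ n → ‖1 - lam ^ n‖ < 1 → m ≤ n) :
    ∀ n : ℕ, 1 ≤ n →
      (¬ m ∣ n → ‖1 - lam ^ n‖ = 1) ∧
      (∀ a j : ℕ, ¬ p ∣ a → n = m * a * p ^ j →
        ‖1 - lam ^ n‖ = ‖1 - lam ^ m‖ ^ (p ^ j)) := by
  intro n _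
  refine ⟨fun hmn => ?_, fun a j hpa hn => ?_⟩
  · have hr_pos : 1 ≤ n % m := Nat.pos_of_ne_zero (mt Nat.dvd_of_mod_eq_zero hmn)
    have hr : ‖1 - lam ^ (n % m)‖ = 1 :=
      (norm_one_sub_le_one_of_norm_le_one (by rw [norm_pow, hlam, one_pow])).antisymm
        (not_lt.1 fun h => (Nat.mod_lt n hm1).not_ge (hmin _ hr_pos h))
    rw [norm_one_sub_pow_eq_norm_one_sub_pow_mod hlam (hr ▸ hm2), hr]
  · have := Fact.mk hp
    have hfrob : 1 - lam ^ n = (1 - (lam ^ m) ^ a) ^ p ^ j := by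
      rw [sub_pow_char_pow, one_pow, ← pow_mul, ← pow_mul, hn, mul_assoc]
    rw [hfrob, norm_pow,
      norm_one_sub_pow_eq_of_norm_natCast_eq_one hm2 (norm_natCast_eq_one_of_not_dvd hp hpa)]

/-- Let `K` be a complete non-Archimedean valued field of characteristic `p > 0`, `λ ∈ K` with
`‖λ‖ = 1`, and `m` the least positive integer with `‖1 - λ ^ m‖ < 1`.  Then for every `n ≥ 1`:
if `m ∤ n` then `‖1 - λ ^ n‖ = 1`, and if `n = m * a * p ^ j` with `p ∤ a`, then
`‖1 - λ ^ n‖ = ‖1 - λ ^ m‖ ^ (p ^ j)`. -/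
theorem norm_one_sub_pow_formula {K : Type*} [NontriviallyNormedField K] [IsUltrametricDist K]
    [CompleteSpace K] (p : ℕ) (hp : p.Prime) [CharP K p]
    (lam : K) (hlam : ‖lam‖ = 1) (m : ℕ) (hm1 : 1 ≤ m)
    (hm2 : ‖1 - lam ^ m‖ < 1)
    (hmin : ∀ n : ℕ, 1 ≤ n → ‖1 - lam ^ n‖ < 1 → m ≤ n) :
    ∀ n : ℕ, 1 ≤ n →
      (¬ m ∣ n → ‖1 - lam ^ n‖ = 1) ∧
      (∀ a j : ℕ, ¬ p ∣ a → n = m * a * p ^ j →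
        ‖1 - lam ^ n‖ = ‖1 - lam ^ m‖ ^ (p ^ j)) :=
  norm_one_sub_pow_formula_general p hp lam hlam m hm1 hm2 hmin
end

section
/- Let K be a field of characteristic p > 0 and f(x) = λx + a_{p+1}x^{p+1} ∈ K[x] with λ not a root of unity. Then the formal solution g(x) = Σ b_k x^k of the Schröder equation g∘f = λg (with b_1 = 1) satisfies b_k = 0 unless k ≡ 1 mod p, and for all j ≥ 1, b_{jp+1} = (1/(λ(1-λ^{jp}))) · Σ_{i=⌈(j-1)/(p+1)⌉}^{j-1} b_{ip+1} · C(ip+1, j-i) · λ^{ip+1-(j-i)} · a_{p+1}^{j-i}. -/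
/-! By the binomial theorem `(λx + a x^{p+1})^k = ∑_m C(k, m) λ^{k-m} a^m x^{k+mp}`, so `x^n`
occurs in `f^k` only when `k ≡ n (mod p)`. Hence the Schröder equation at `x^{jp+r}` (`r < p`)
couples only the coefficients `b_{ip+r}`, `i ≤ j`, and its diagonal term is `b_{jp+r} λ^{jp+r}`:
`b_{jp+r} (λ - λ^{jp+r}) = ∑_{i<j} b_{ip+r} C(ip+r, j-i) λ^{ip+r-(j-i)} a^{j-i}`.
As `λ^n ≠ λ` for `n ≠ 1`, induction on `j` kills every residue class `r ≠ 1`, and `r = 1` is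
the recursion. The terms with `ip+1 < j-i` vanish, which gives the lower limit
`⌈(j-1)/(p+1)⌉`. -/

open PowerSeries

/-- The Schröder functional equation `g ∘ f = λ·g`, stated coefficient-wise for the formal
power series `f = F` and `g = ∑ b k · xᵏ`.  Since `F` has zero constant term, the coefficient
of `xⁿ` in `g ∘ F` only involves `Fᵏ` for `k ≤ n`. -/
def SchroderEq {K : Type*} [Field K] (lam : K) (F : PowerSeries K) (b : ℕ → K) : Prop :=
  ∀ n : ℕ,
    (PowerSeries.coeff n) (∑ k ∈ Finset.range (n + 1), PowerSeries.C (b k) * F ^ k) =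
      lam * b n

open Finset

section
variable {K : Type*} [Field K] (lam a : K) (p : ℕ)

theorem pow_C_mul_X_add_C_mul_X_pow_eq_sum {k N : ℕ} (hk : k < N) :
    (C lam * X + C a * X ^ (p + 1)) ^ k =
      ∑ m ∈ range N, C ((k.choose m : K) * lam ^ (k - m) * a ^ m) * X ^ (k + m * p) := by
  calc _ = ∑ m ∈ range (k + 1),
        C ((k.choose m : K) * lam ^ (k - m) * a ^ m) * X ^ (k + m * p) := by
        rw [add_comm, add_pow]
        refine sum_congr rfl fun m hm => ?_
        have hmk : m ≤ k := Nat.lt_succ_iff.1 (mem_range.1 hm)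
        have hexp : k + m * p = (p + 1) * m + (k - m) := by
          rw [Nat.add_mul, one_mul, Nat.mul_comm p m]; omega
        rw [hexp, pow_add (X : K⟦X⟧) ((p + 1) * m), pow_mul]
        simp only [map_mul, map_pow, map_natCast]
        ring
    _ = _ := sum_subset (range_subset_range.2 hk) fun m _ hm => by
        rw [Nat.choose_eq_zero_of_lt (by simpa using hm)]
        simp

theorem coeff_sum_C_mul_pow_eq_sum (b : ℕ → K) (n : ℕ) :
    coeff n (∑ k ∈ range (n + 1), C (b k) * (C lam * X + C a * X ^ (p + 1)) ^ k) =
      ∑ m ∈ range (n + 1), if m * p ≤ n then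
        b (n - m * p) * ((n - m * p).choose m : K) * lam ^ (n - m * p - m) * a ^ m else 0 := by
  calc _ = ∑ k ∈ range (n + 1), ∑ m ∈ range (n + 1), if n = k + m * p then
        b k * (k.choose m : K) * lam ^ (k - m) * a ^ m else 0 := by
        rw [map_sum]
        refine sum_congr rfl fun k hk => ?_
        rw [pow_C_mul_X_add_C_mul_X_pow_eq_sum lam a p (mem_range.1 hk), mul_sum, map_sum]
        refine sum_congr rfl fun m _ => ?_
        rw [← mul_assoc, ← map_mul, coeff_C_mul_X_pow]
        simp only [mul_assoc]
    _ = _ := by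
        rw [sum_comm]
        refine sum_congr rfl fun m _ => ?_
        split_ifs with hmp
        · rw [sum_eq_single (n - m * p) (fun k _ hk => if_neg (by omega))
            (fun h => absurd (mem_range.2 (by omega)) h), if_pos (by omega)]
        · exact sum_eq_zero fun k _ => if_neg (by omega)

theorem coeff_sum_C_mul_pow_eq_sum_residue {r : ℕ} (hr : r < p) (b : ℕ → K) (j : ℕ) :
    coeff (j * p + r)
        (∑ k ∈ range (j * p + r + 1), C (b k) * (C lam * X + C a * X ^ (p + 1)) ^ k) =
      ∑ i ∈ range (j + 1), b (i * p + r) * ((i * p + r).choose (j - i) : K) *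
        lam ^ (i * p + r - (j - i)) * a ^ (j - i) := by
  have hfilter : {m ∈ range (j * p + r + 1) | m * p ≤ j * p + r} = range (j + 1) := by
    ext m
    simp only [mem_filter, mem_range]
    constructor
    · rintro ⟨-, hm⟩
      exact Nat.lt_of_mul_lt_mul_right (a := p) (by rw [Nat.succ_mul]; omega)
    · intro hm
      have := Nat.mul_le_mul_right p (Nat.lt_succ_iff.1 hm)
      have := Nat.le_mul_of_pos_right j (by omega : 0 < p)
      omega
  rw [coeff_sum_C_mul_pow_eq_sum, ← sum_filter, hfilter, ← sum_range_reflect]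
  refine sum_congr rfl fun m hm => ?_
  have hmj : m ≤ j := Nat.lt_succ_iff.1 (mem_range.1 hm)
  have hsub : j * p + r - (j - m) * p = m * p + r := by
    rw [Nat.sub_mul]; have := Nat.mul_le_mul_right p hmj; omega
  rw [Nat.add_sub_cancel, hsub]

theorem SchroderEq.mul_sub_pow_eq_sum {b : ℕ → K}
    (hS : SchroderEq lam (C lam * X + C a * X ^ (p + 1)) b) {r : ℕ} (hr : r < p) (j : ℕ) :
    b (j * p + r) * (lam - lam ^ (j * p + r)) =
      ∑ i ∈ range j, b (i * p + r) * ((i * p + r).choose (j - i) : K) *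
        lam ^ (i * p + r - (j - i)) * a ^ (j - i) := by
  have h := hS (j * p + r)
  rw [coeff_sum_C_mul_pow_eq_sum_residue lam a p hr, sum_range_succ] at h
  simp only [Nat.sub_self, Nat.choose_zero_right, Nat.cast_one, Nat.sub_zero, pow_zero,
    mul_one] at h
  linear_combination -h

end

theorem pow_ne_self_of_pow_ne_one {M₀ : Type*} [MonoidWithZero M₀] [IsRightCancelMulZero M₀]
    {x : M₀} (hx : x ≠ 0) (hroot : ∀ n : ℕ, 1 ≤ n → x ^ n ≠ 1) {n : ℕ} (hn : n ≠ 1) :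
    x ^ n ≠ x := by
  intro h
  rcases Nat.lt_or_gt_of_ne hn with h0 | h2
  · rw [Nat.lt_one_iff.1 h0, pow_zero] at h
    exact hroot 1 le_rfl (by rw [pow_one, ← h])
  · rw [← Nat.sub_add_cancel h2.le, pow_succ] at h
    exact hroot (n - 1) (by omega) ((mul_eq_right₀ hx).1 h)

theorem sum_range_eq_sum_Icc_of_eq_zero {M : Type*} [AddCommMonoid M] {p j : ℕ} (hj : 1 ≤ j)
    (f : ℕ → M) (hf : ∀ i, i * p + 1 < j - i → f i = 0) :
    ∑ i ∈ range j, f i = ∑ i ∈ Icc ((j - 1 + p) / (p + 1)) (j - 1), f i := by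
  refine (sum_subset (fun i hi => mem_range.2 (by rw [mem_Icc] at hi; omega))
    fun i hi hi' => hf i ?_).symm
  rw [mem_range] at hi
  rw [mem_Icc, not_and_or, not_le, not_le] at hi'
  have hlt : i < (j - 1 + p) / (p + 1) := by omega
  have := (Nat.le_div_iff_mul_le (Nat.succ_pos p)).1 hlt
  rw [Nat.succ_mul, Nat.mul_succ] at this
  omega

theorem schroder_coeff_recursion_p_plus_one_general {K : Type*} [Field K]
    (p : ℕ) (hp : p.Prime)
    (lam : K) (hlam0 : lam ≠ 0) (hroot : ∀ n : ℕ, 1 ≤ n → lam ^ n ≠ 1)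
    (a : K)
    (b : ℕ → K)
    (hS : SchroderEq lam (PowerSeries.C lam * PowerSeries.X +
      PowerSeries.C a * PowerSeries.X ^ (p + 1)) b) :
    (∀ k : ℕ, k % p ≠ 1 → b k = 0) ∧
      ∀ j : ℕ, 1 ≤ j →
        b (j * p + 1) = (1 / (lam * (1 - lam ^ (j * p)))) *
          ∑ i ∈ Finset.Icc ((j - 1 + p) / (p + 1)) (j - 1),
            b (i * p + 1) * (Nat.choose (i * p + 1) (j - i) : K) *
              lam ^ (i * p + 1 - (j - i)) * a ^ (j - i) := by
  refine ⟨fun k hk => ?_, fun j hj => ?_⟩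
  · suffices h : ∀ j, b (j * p + k % p) = 0 by simpa [Nat.div_add_mod'] using h (k / p)
    intro j
    induction j using Nat.strong_induction_on with
    | _ j ih =>
      have h := hS.mul_sub_pow_eq_sum lam a p (Nat.mod_lt k hp.pos) j
      rw [sum_eq_zero fun i hi => by
        rw [ih i (mem_range.1 hi), zero_mul, zero_mul, zero_mul]] at h
      have hne : j * p + k % p ≠ 1 := by
        rcases Nat.eq_zero_or_pos j with rfl | hj
        · simpa using hk
        · have := Nat.mul_le_mul hj hp.two_le; omega
      exact (mul_eq_zero.1 h).resolve_right
        (sub_ne_zero.2 (pow_ne_self_of_pow_ne_one hlam0 hroot hne).symm)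
  · have h := hS.mul_sub_pow_eq_sum lam a p hp.one_lt j
    rw [sum_range_eq_sum_Icc_of_eq_zero hj _ fun i hi => by
      rw [Nat.choose_eq_zero_of_lt hi, Nat.cast_zero, mul_zero, zero_mul, zero_mul]] at h
    have hden : lam * (1 - lam ^ (j * p)) ≠ 0 :=
      mul_ne_zero hlam0 (sub_ne_zero.2 (hroot _ (Nat.mul_pos hj hp.pos)).symm)
    rw [one_div_mul_eq_div, eq_div_iff hden, ← h]
    ring

/-- Let `K` be a field of characteristic `p > 0` and `f(x) = λx + a x^{p+1}` with `λ` not a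
root of unity.  The formal solution `g = ∑ b_k xᵏ` of the Schröder equation (with `b₀ = 0`,
`b₁ = 1`) satisfies `b_k = 0` unless `k ≡ 1 (mod p)`, and for all `j ≥ 1`,
`b_{jp+1} = (1/(λ(1-λ^{jp}))) ∑_{i=⌈(j-1)/(p+1)⌉}^{j-1} b_{ip+1} C(ip+1, j-i) λ^{ip+1-(j-i)} a^{j-i}`. -/
theorem schroder_coeff_recursion_p_plus_one {K : Type*} [Field K]
    (p : ℕ) (hp : p.Prime) [CharP K p]
    (lam : K) (hlam0 : lam ≠ 0) (hroot : ∀ n : ℕ, 1 ≤ n → lam ^ n ≠ 1)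
    (a : K)
    (b : ℕ → K) (hb0 : b 0 = 0) (hb1 : b 1 = 1)
    (hS : SchroderEq lam (PowerSeries.C lam * PowerSeries.X +
      PowerSeries.C a * PowerSeries.X ^ (p + 1)) b) :
    (∀ k : ℕ, k % p ≠ 1 → b k = 0) ∧
      ∀ j : ℕ, 1 ≤ j →
        b (j * p + 1) = (1 / (lam * (1 - lam ^ (j * p)))) *
          ∑ i ∈ Finset.Icc ((j - 1 + p) / (p + 1)) (j - 1),
            b (i * p + 1) * (Nat.choose (i * p + 1) (j - i) : K) *
              lam ^ (i * p + 1 - (j - i)) * a ^ (j - i) :=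
  schroder_coeff_recursion_p_plus_one_general p hp lam hlam0 hroot a b hS
end

section
/- Let K be a non-Archimedean valued field of characteristic p > 0 and f(x) = λx + a_{p+1}x^{p+1} with |λ| = 1, λ not a root of unity, and |1 - λ| < 1. Then the formal conjugacy g = x + Σ b_k x^k solving g∘f = λg satisfies |b_{jp+1}| = |a_{p+1}|^j / ∏_{i=1}^{j} |1 - λ^{ip}| for all j ≥ 1, and b_k = 0 for all other k ≥ 2. -/
/-!
Write `f = λX + aX^{p+1}`, so that `fᵏ = ∑_r C(k,r) a^r λ^{k-r} X^{k+rp}`. The coefficient of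
`Xⁿ` in `g ∘ f = λ g` reads `(λ - λⁿ) bₙ = ∑_{k<n} b_k [Xⁿ] fᵏ`, and `[Xⁿ] fᵏ = 0` unless
`n ≡ k (mod p)`; since `λⁿ ≠ λ` for `n ≠ 1`, induction gives `bₙ = 0` unless `n ≡ 1 (mod p)`.

For `n = (j+1)p + 1` only the `b_{ip+1}`, `i ≤ j`, remain. In characteristic `p` the term `i = j`
is `(jp+1) a λ^{jp} b_{jp+1} = a λ^{jp} b_{jp+1}`, of norm `|a|^{j+1} / D_j` with
`D_j = ∏_{i ≤ j} |1 - λ^{ip}|`, while the term `i < j` has norm at most `|a|^{j+1} / D_i`. As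
`|1 - λ^m| < 1`, the `D_j` decrease strictly, so the term `i = j` dominates, the ultrametric
inequality makes it the norm of the whole sum, and `|λ - λ^{(j+1)p+1}| = |1 - λ^{(j+1)p}|`.
-/

open PowerSeries

open Finset

theorem pow_ne_self_of_ne_one {M : Type*} [MonoidWithZero M] [IsRightCancelMulZero M] {x : M}
    (hx : x ≠ 0) (hroot : ∀ n, 1 ≤ n → x ^ n ≠ 1) {n : ℕ} (hn : n ≠ 1) : x ^ n ≠ x := by
  rcases n with _ | _ | n
  · simpa [eq_comm] using hroot 1 le_rfl
  · exact absurd rfl hn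
  · intro h
    refine hroot (n + 1) (by omega) (mul_right_cancel₀ hx ?_)
    rw [← pow_succ, h, one_mul]

theorem Finset.sum_range_mul_add_two_of_modEq {M : Type*} [AddCommMonoid M] {p : ℕ} (hp : 1 < p)
    {f : ℕ → M} (hf : ∀ k, f k ≠ 0 → k ≡ 1 [MOD p]) (j : ℕ) :
    ∑ k ∈ range (j * p + 1 + 1), f k = ∑ i ∈ range (j + 1), f (i * p + 1) := by
  have hinj : Set.InjOn (fun i => i * p + 1) (range (j + 1)) := fun x _ y _ h =>
    Nat.eq_of_mul_eq_mul_right (by omega) (Nat.add_right_cancel h)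
  rw [← sum_image hinj]
  refine (sum_subset (fun k hk => ?_) fun k _ hk => ?_).symm
  · obtain ⟨i, hi, rfl⟩ := mem_image.mp hk
    have := Nat.mul_le_mul_right p (Nat.lt_succ_iff.mp (mem_range.mp hi))
    exact mem_range.mpr (by omega)
  · by_contra hfk
    have hk1 : k % p = 1 := Eq.trans (hf k hfk) (Nat.mod_eq_of_lt hp)
    have hdiv : k / p * p + 1 = k := by rw [← hk1, Nat.div_add_mod']
    have hle : k / p * p ≤ j * p := by have := mem_range.mp ‹k ∈ _›; omega
    exact hk (mem_image.mpr ⟨k / p,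
      mem_range.mpr (Nat.lt_succ_of_le (Nat.le_of_mul_le_mul_right hle (by omega))), hdiv⟩)

theorem StrictAnti.prod_Icc_one {u : ℕ → ℝ} (h0 : ∀ i, 1 ≤ i → 0 < u i)
    (h1 : ∀ i, 1 ≤ i → u i < 1) : StrictAnti fun j => ∏ i ∈ Icc 1 j, u i :=
  strictAnti_nat_of_succ_lt fun j => by
    rw [prod_Icc_succ_top (by omega)]
    exact mul_lt_of_lt_one_right (prod_pos fun i hi => h0 i (mem_Icc.mp hi).1) (h1 _ (by omega))

-- Ratios `r i < 1` rather than `‖f i‖ < ‖y‖`, so that `y = 0` (the case `a = 0`) is covered.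
theorem IsUltrametricDist.norm_sum_add_eq_of_forall_norm_le_mul {ι E : Type*}
    [SeminormedAddCommGroup E] [IsUltrametricDist E] {s : Finset ι} {f : ι → E} {y : E}
    {r : ι → ℝ} (hr : ∀ i ∈ s, r i < 1) (hf : ∀ i ∈ s, ‖f i‖ ≤ r i * ‖y‖) :
    ‖∑ i ∈ s, f i + y‖ = ‖y‖ := by
  rcases (norm_nonneg y).eq_or_lt with hy | hy
  · have hsum : ‖∑ i ∈ s, f i‖ ≤ 0 := norm_sum_le_of_forall_le_of_nonneg le_rfl
      fun i hi => by simpa [← hy] using hf i hi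
    have := (norm_add_le_max (∑ i ∈ s, f i) y).trans (max_le hsum hy.ge)
    linarith [norm_nonneg (∑ i ∈ s, f i + y)]
  have hlt : ‖∑ i ∈ s, f i‖ < ‖y‖ := by
    rcases s.eq_empty_or_nonempty with rfl | hs
    · simpa using hy
    obtain ⟨i, hi, hle⟩ := exists_norm_finsetSum_le_of_nonempty hs f
    exact hle.trans_lt ((hf i hi).trans_lt (mul_lt_of_lt_one_left hy (hr i hi)))
  rw [norm_add_eq_max_of_norm_ne_norm hlt.ne, max_eq_right hlt.le]

theorem norm_one_sub_pow_lt_one {K : Type*} [NormedField K] [IsUltrametricDist K] {x : K}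
    (hx : ‖1 - x‖ < 1) (m : ℕ) : ‖1 - x ^ m‖ < 1 := by
  have hx1 : ‖x‖ ≤ 1 := by
    have := IsUltrametricDist.norm_add_le_max (x - 1) 1
    rw [sub_add_cancel, norm_sub_rev, norm_one] at this
    exact this.trans (max_le hx.le le_rfl)
  induction m with
  | zero => simp
  | succ m ih =>
    have hsplit : 1 - x ^ (m + 1) = (1 - x) + x * (1 - x ^ m) := by ring
    rw [hsplit]
    refine (IsUltrametricDist.norm_add_le_max _ _).trans_lt (max_lt hx ?_)
    rw [norm_mul]
    exact (mul_le_of_le_one_left (norm_nonneg _) hx1).trans_lt ih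

noncomputable def linearAddMonomial {R : Type*} [CommSemiring R] (lam a : R) (p : ℕ) : R⟦X⟧ :=
  C lam * X + C a * X ^ (p + 1)

section Coeff

variable {R : Type*} [CommSemiring R] (lam a : R) {p : ℕ}

theorem linearAddMonomial_pow (k : ℕ) :
    linearAddMonomial lam a p ^ k =
      ∑ r ∈ range (k + 1), C (a ^ r * lam ^ (k - r) * k.choose r) * X ^ (k + r * p) := by
  rw [linearAddMonomial, add_comm, add_pow]
  refine sum_congr rfl fun r hr => ?_
  obtain ⟨d, rfl⟩ := Nat.exists_eq_add_of_le (Nat.lt_succ_iff.mp (mem_range.mp hr))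
  simp only [Nat.add_sub_cancel_left, map_mul, map_pow, map_natCast]
  ring

theorem modEq_of_coeff_linearAddMonomial_pow_ne_zero {k n : ℕ}
    (h : coeff n (linearAddMonomial lam a p ^ k) ≠ 0) : n ≡ k [MOD p] := by
  rw [linearAddMonomial_pow, map_sum] at h
  obtain ⟨r, -, hr⟩ := exists_ne_zero_of_sum_ne_zero h
  rw [coeff_C_mul_X_pow] at hr
  rw [(ite_ne_right_iff.mp hr).1]
  exact Nat.add_mul_mod_self_right k r p

theorem coeff_linearAddMonomial_pow_add_mul (hp : 0 < p) (k r : ℕ) :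
    coeff (k + r * p) (linearAddMonomial lam a p ^ k) = a ^ r * lam ^ (k - r) * k.choose r := by
  have hinj : ∀ s, k + r * p = k + s * p ↔ r = s := fun s => by
    rw [Nat.add_left_cancel_iff, Nat.mul_left_inj hp.ne']
  simp only [linearAddMonomial_pow, map_sum, coeff_C_mul_X_pow, hinj, sum_ite_eq, mem_range]
  split_ifs with hrk
  · rfl
  · rw [Nat.choose_eq_zero_of_lt (by omega), Nat.cast_zero, mul_zero]

theorem coeff_linearAddMonomial_pow_self (hp : 0 < p) (k : ℕ) :
    coeff k (linearAddMonomial lam a p ^ k) = lam ^ k := by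
  simpa using coeff_linearAddMonomial_pow_add_mul lam a hp k 0

end Coeff

section Schroder

variable {K : Type*} [Field K] {lam a : K} {p : ℕ} {b : ℕ → K}

theorem SchroderEq.sum_mul_coeff_pow {F : K⟦X⟧} (hS : SchroderEq lam F b) (n : ℕ) :
    ∑ k ∈ range (n + 1), b k * coeff n (F ^ k) = lam * b n := by
  simpa only [map_sum, coeff_C_mul] using hS n

theorem SchroderEq.modEq_one_of_ne_zero (hp : 0 < p) (hlam : ∀ n, n ≠ 1 → lam ^ n ≠ lam)
    (hS : SchroderEq lam (linearAddMonomial lam a p) b) {n : ℕ} (hn : b n ≠ 0) :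
    n ≡ 1 [MOD p] := by
  induction n using Nat.strong_induction_on with
  | _ n ih =>
  by_contra hn1
  have hlower : ∑ k ∈ range n, b k * coeff n (linearAddMonomial lam a p ^ k) = 0 := by
    refine sum_eq_zero fun k hk => ?_
    by_cases hbk : b k = 0
    · rw [hbk, zero_mul]
    by_contra hne
    have hnk := modEq_of_coeff_linearAddMonomial_pow_ne_zero lam a (right_ne_zero_of_mul hne)
    exact hn1 (hnk.trans (ih k (mem_range.mp hk) hbk))
  have h := hS.sum_mul_coeff_pow n
  rw [sum_range_succ, hlower, zero_add, coeff_linearAddMonomial_pow_self lam a hp] at h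
  exact hlam n (by rintro rfl; exact hn1 rfl) (mul_left_cancel₀ hn (h.trans (mul_comm _ _)))

theorem SchroderEq.sum_mul_coeff_pow_mul_add_one (hp : 1 < p) (hlam : ∀ n, n ≠ 1 → lam ^ n ≠ lam)
    (hS : SchroderEq lam (linearAddMonomial lam a p) b) (j : ℕ) :
    ∑ i ∈ range (j + 1),
      b (i * p + 1) * coeff (j * p + 1) (linearAddMonomial lam a p ^ (i * p + 1)) =
        lam * b (j * p + 1) := by
  rw [← hS.sum_mul_coeff_pow, sum_range_mul_add_two_of_modEq hp]
  exact fun k hk => hS.modEq_one_of_ne_zero (by omega) hlam (left_ne_zero_of_mul hk)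

end Schroder

section Norm

variable {K : Type*} [NormedField K] {lam a : K} {p : ℕ}

theorem norm_coeff_linearAddMonomial_pow_mul_add_one [CharP K p] (hp : 0 < p) (hlam : ‖lam‖ = 1)
    (j : ℕ) : ‖coeff (j * p + 1 + 1 * p) (linearAddMonomial lam a p ^ (j * p + 1))‖ = ‖a‖ := by
  have hcast : ((j * p + 1 : ℕ) : K) = 1 := by simp
  rw [coeff_linearAddMonomial_pow_add_mul lam a hp, Nat.choose_one_right, hcast]
  simp [hlam]

variable [IsUltrametricDist K]

theorem norm_coeff_linearAddMonomial_pow_le (hp : 0 < p) (hlam : ‖lam‖ ≤ 1) (k r : ℕ) :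
    ‖coeff (k + r * p) (linearAddMonomial lam a p ^ k)‖ ≤ ‖a‖ ^ r := by
  rw [coeff_linearAddMonomial_pow_add_mul lam a hp, norm_mul, norm_mul, norm_pow, norm_pow]
  calc ‖a‖ ^ r * ‖lam‖ ^ (k - r) * ‖(k.choose r : K)‖ ≤ ‖a‖ ^ r * 1 * 1 := by
        gcongr
        · exact pow_le_one₀ (norm_nonneg _) hlam
        · exact IsUltrametricDist.norm_natCast_le_one K _
    _ = ‖a‖ ^ r := by ring

theorem norm_sum_mul_coeff_linearAddMonomial_pow [CharP K p] (hp : 0 < p) (hlam : ‖lam‖ = 1)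
    {D : ℕ → ℝ} (hD_pos : ∀ i, 0 < D i) (hD_anti : StrictAnti D) {c : ℕ → K} {j : ℕ}
    (hc : ∀ i ≤ j, ‖c i‖ = ‖a‖ ^ i / D i) :
    ‖∑ i ∈ range (j + 1), c i * coeff ((j + 1) * p + 1) (linearAddMonomial lam a p ^ (i * p + 1))‖ =
      ‖a‖ ^ (j + 1) / D j := by
  set t : ℕ → K := fun i => c i * coeff ((j + 1) * p + 1) (linearAddMonomial lam a p ^ (i * p + 1))
    with ht
  have hidx : ∀ i ≤ j + 1, (j + 1) * p + 1 = i * p + 1 + (j + 1 - i) * p := by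
    intro i hi
    zify [hi]
    ring
  have hlead : ‖t j‖ = ‖a‖ ^ (j + 1) / D j := by
    rw [ht, norm_mul, hidx j (by omega), Nat.add_sub_cancel_left,
      norm_coeff_linearAddMonomial_pow_mul_add_one hp hlam, hc j le_rfl, div_mul_eq_mul_div,
      pow_succ]
  have hrest : ∀ i ∈ range j, ‖t i‖ ≤ D j / D i * ‖t j‖ := by
    intro i hi
    have hij := mem_range.mp hi
    rw [hlead, ht, norm_mul, hidx i (by omega), hc i hij.le]
    calc ‖a‖ ^ i / D i * ‖coeff (i * p + 1 + (j + 1 - i) * p)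
            (linearAddMonomial lam a p ^ (i * p + 1))‖
        ≤ ‖a‖ ^ i / D i * ‖a‖ ^ (j + 1 - i) := by
          have hnonneg : 0 ≤ ‖a‖ ^ i / D i := div_nonneg (by positivity) (hD_pos i).le
          exact mul_le_mul_of_nonneg_left (norm_coeff_linearAddMonomial_pow_le hp hlam.le _ _)
            hnonneg
      _ = D j / D i * (‖a‖ ^ (j + 1) / D j) := by
          rw [← pow_mul_pow_sub ‖a‖ (show i ≤ j + 1 by omega)]
          field_simp [(hD_pos j).ne', (hD_pos i).ne']
  rw [sum_range_succ, IsUltrametricDist.norm_sum_add_eq_of_forall_norm_le_mul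
    (fun i hi => (div_lt_one (hD_pos i)).mpr (hD_anti (mem_range.mp hi))) hrest, hlead]

theorem norm_eq_div_prod_of_sum_mul_coeff_eq [CharP K p] (hp : 0 < p) (hlam : ‖lam‖ = 1)
    (hroot : ∀ n, 1 ≤ n → lam ^ n ≠ 1) (hsmall : ‖1 - lam‖ < 1) {c : ℕ → K} (hc0 : c 0 = 1)
    (hrec : ∀ j, ∑ i ∈ range (j + 1),
      c i * coeff (j * p + 1) (linearAddMonomial lam a p ^ (i * p + 1)) = lam * c j)
    (j : ℕ) : ‖c j‖ = ‖a‖ ^ j / ∏ i ∈ Icc 1 j, ‖1 - lam ^ (i * p)‖ := by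
  set D : ℕ → ℝ := fun j => ∏ i ∈ Icc 1 j, ‖1 - lam ^ (i * p)‖
  have hu_pos : ∀ i, 1 ≤ i → 0 < ‖1 - lam ^ (i * p)‖ := fun i hi =>
    norm_pos_iff.mpr (sub_ne_zero.mpr (hroot _ (Nat.one_le_iff_ne_zero.mpr (by positivity))).symm)
  have hD_pos : ∀ j, 0 < D j := fun j => prod_pos fun i hi => hu_pos i (mem_Icc.mp hi).1
  have hD_anti : StrictAnti D :=
    StrictAnti.prod_Icc_one hu_pos fun i _ => norm_one_sub_pow_lt_one hsmall _
  induction j using Nat.strong_induction_on with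
  | _ j ih =>
  rcases j with _ | j
  · simp [hc0]
  have hsplit : lam * (1 - lam ^ ((j + 1) * p)) * c (j + 1) = ∑ i ∈ range (j + 1),
      c i * coeff ((j + 1) * p + 1) (linearAddMonomial lam a p ^ (i * p + 1)) := by
    have h := hrec (j + 1)
    rw [sum_range_succ, coeff_linearAddMonomial_pow_self lam a hp] at h
    linear_combination -h
  have hnorm : ‖1 - lam ^ ((j + 1) * p)‖ * ‖c (j + 1)‖ = ‖a‖ ^ (j + 1) / D j := by
    rw [← norm_sum_mul_coeff_linearAddMonomial_pow hp hlam hD_pos hD_anti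
      fun i hi => ih i (by omega), ← hsplit, norm_mul, norm_mul, hlam, one_mul]
  show ‖c (j + 1)‖ = ‖a‖ ^ (j + 1) / D (j + 1)
  rw [show D (j + 1) = D j * ‖1 - lam ^ ((j + 1) * p)‖ from prod_Icc_succ_top (by omega) _,
    eq_div_iff (mul_pos (hD_pos j) (hu_pos _ (by omega))).ne',
    ← (eq_div_iff (hD_pos j).ne').mp hnorm]
  ring

end Norm

theorem schroder_coeff_norm_p_plus_one_general {K : Type*} [NontriviallyNormedField K]
    [IsUltrametricDist K] (p : ℕ) (hp : p.Prime) [CharP K p]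
    (lam : K) (hlam : ‖lam‖ = 1) (hroot : ∀ n : ℕ, 1 ≤ n → lam ^ n ≠ 1)
    (hsmall : ‖1 - lam‖ < 1) (a : K)
    (b : ℕ → K) (hb1 : b 1 = 1)
    (hS : SchroderEq lam (PowerSeries.C lam * PowerSeries.X +
      PowerSeries.C a * PowerSeries.X ^ (p + 1)) b) :
    (∀ j : ℕ, 1 ≤ j →
        ‖b (j * p + 1)‖ = ‖a‖ ^ j / ∏ i ∈ Finset.Icc 1 j, ‖1 - lam ^ (i * p)‖) ∧
      ∀ k : ℕ, 2 ≤ k → k % p ≠ 1 → b k = 0 := by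
  have hS' : SchroderEq lam (linearAddMonomial lam a p) b := hS
  have hlam0 : lam ≠ 0 := norm_ne_zero_iff.mp (by rw [hlam]; exact one_ne_zero)
  have hpow : ∀ n, n ≠ 1 → lam ^ n ≠ lam := fun n => pow_ne_self_of_ne_one hlam0 hroot
  refine ⟨fun j _ => ?_, fun k _ hk => ?_⟩
  · exact norm_eq_div_prod_of_sum_mul_coeff_eq hp.pos hlam hroot hsmall
      (c := fun i => b (i * p + 1)) (by simpa using hb1)
      (hS'.sum_mul_coeff_pow_mul_add_one hp.one_lt hpow) j
  · by_contra hbk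
    exact hk (Eq.trans (hS'.modEq_one_of_ne_zero hp.pos hpow hbk) (Nat.mod_eq_of_lt hp.one_lt))

/-- Let `K` be a non-Archimedean valued field of characteristic `p > 0` and
`f(x) = λx + a x^{p+1}` with `‖λ‖ = 1`, `λ` not a root of unity and `‖1 - λ‖ < 1`.  Then the
formal conjugacy `g = x + ∑ b_k xᵏ` solving `g ∘ f = λ·g` satisfies
`‖b_{jp+1}‖ = ‖a‖ʲ / ∏_{i=1}^{j} ‖1 - λ^{ip}‖` for all `j ≥ 1`, and `b_k = 0` for all other
`k ≥ 2`. -/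
theorem schroder_coeff_norm_p_plus_one {K : Type*} [NontriviallyNormedField K]
    [IsUltrametricDist K] (p : ℕ) (hp : p.Prime) [CharP K p]
    (lam : K) (hlam : ‖lam‖ = 1) (hroot : ∀ n : ℕ, 1 ≤ n → lam ^ n ≠ 1)
    (hsmall : ‖1 - lam‖ < 1) (a : K)
    (b : ℕ → K) (hb0 : b 0 = 0) (hb1 : b 1 = 1)
    (hS : SchroderEq lam (PowerSeries.C lam * PowerSeries.X +
      PowerSeries.C a * PowerSeries.X ^ (p + 1)) b) :
    (∀ j : ℕ, 1 ≤ j →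
        ‖b (j * p + 1)‖ = ‖a‖ ^ j / ∏ i ∈ Finset.Icc 1 j, ‖1 - lam ^ (i * p)‖) ∧
      ∀ k : ℕ, 2 ≤ k → k % p ≠ 1 → b k = 0 :=
  schroder_coeff_norm_p_plus_one_general p hp lam hlam hroot hsmall a b hb1 hS
end

section
/- Let K be a complete non-Archimedean valued field of characteristic p > 0 and f(x) = λx + a_{p+1}x^{p+1} ∈ K[x] with a_{p+1} ≠ 0, |λ| = 1, and |1 - λ| < 1. Then the formal conjugacy g solving g∘f = λg has radius of convergence zero; in particular, f is not analytically linearizable at the fixed point 0. -/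
/-!
Comparing coefficients of `x ^ (p t + 1)` in `g ∘ f = λ g` gives
`(λ - λ ^ (p t + 1)) b (p t + 1) = a λ ^ (p (t - 1)) b (p (t - 1) + 1) + (smaller terms)`,
because the binomial coefficient `p (t - 1) + 1` equals `1` in characteristic `p` and the
small divisors decrease strictly. Hence `‖b (p t + 1)‖ = ‖a‖ ^ t / ∏_{i ≤ t} ‖λ ^ (p i) - 1‖`, and
by Frobenius `‖λ ^ (p i) - 1‖ = ‖λ ^ i - 1‖ ^ p`. Every `‖λ ^ i - 1‖` is at most `‖λ - 1‖ < 1`,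
and it is at most `‖λ - 1‖ ^ (p ^ k)` when `p ^ k ∣ i`; so for `t = p ^ s` the divisor product is
at most `‖λ - 1‖ ^ (s p ^ s)`, which decays faster than any `r ^ (p ^ s)`.
-/

open PowerSeries

open Finset Filter

theorem IsUltrametricDist.norm_add_sum_eq_of_forall_norm_lt {M ι : Type*}
    [SeminormedAddCommGroup M] [IsUltrametricDist M] {x : M} {s : Finset ι} {f : ι → M}
    (h : ∀ i ∈ s, ‖f i‖ < ‖x‖) :
    ‖x + ∑ i ∈ s, f i‖ = ‖x‖ := by
  classical
  induction s using Finset.induction_on with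
  | empty => simp
  | insert i s hi ih =>
    have hs := ih fun j hj => h j (mem_insert_of_mem hj)
    have hlt := h i (mem_insert_self i s)
    rw [sum_insert hi, add_left_comm, norm_add_eq_max_of_norm_ne_norm (hs ▸ hlt.ne), hs,
      max_eq_right hlt.le]

theorem coeff_C_mul_X_add_C_mul_X_pow_pow {R : Type*} [CommSemiring R] (lam a : R)
    (p k n : ℕ) :
    coeff n ((C lam * X + C a * X ^ (p + 1)) ^ k) =
      ∑ j ∈ range (k + 1),
        if n = k + p * j then (k.choose j : R) * lam ^ (k - j) * a ^ j else 0 := by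
  rw [add_comm, add_pow, map_sum]
  refine sum_congr rfl fun j hj => ?_
  have hexp : (p + 1) * j + (k - j) = k + p * j := by
    have := mem_range_succ_iff.1 hj
    rw [add_mul, one_mul]; omega
  rw [mul_pow, mul_pow, ← map_pow, ← map_pow, ← pow_mul, ← map_natCast (C (R := R)),
    show C (a ^ j) * X ^ ((p + 1) * j) * (C (lam ^ (k - j)) * X ^ (k - j)) * C (k.choose j : R)
      = C ((k.choose j : R) * lam ^ (k - j) * a ^ j) * X ^ ((p + 1) * j + (k - j)) by
        rw [pow_add, map_mul, map_mul]; ring,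
    hexp, coeff_C_mul_X_pow]

theorem SchroderEq.recurrence {K : Type*} [Field K] {p : ℕ} (hp : 2 ≤ p) {lam a : K} {b : ℕ → K}
    (hS : SchroderEq lam (C lam * X + C a * X ^ (p + 1)) b) (t : ℕ) :
    lam * b (p * t + 1) =
      ∑ j ∈ range (t + 1),
        ((p * (t - j) + 1).choose j : K) * lam ^ (p * (t - j) + 1 - j) * a ^ j *
          b (p * (t - j) + 1) := by
  have hsplit : ∀ j ≤ t, p * (t - j) + 1 + p * j = p * t + 1 := fun j hj => by
    rw [add_right_comm, ← mul_add, Nat.sub_add_cancel hj]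
  rw [← hS, map_sum]
  simp_rw [coeff_C_mul, coeff_C_mul_X_add_C_mul_X_pow_pow, mul_sum, sum_sigma']
  symm
  -- `k + p j = p t + 1` with `2 ≤ p` forces `j ≤ t` and `k = p (t - j) + 1`.
  refine sum_bij_ne_zero (fun j _ _ => ⟨p * (t - j) + 1, j⟩) ?_ ?_ ?_ ?_
  · intro j hj hne
    have hjk : j ≤ p * (t - j) + 1 := by
      by_contra! h
      simp [Nat.choose_eq_zero_of_lt h] at hne
    have := hsplit j (mem_range_succ_iff.1 hj)
    simp only [mem_sigma, mem_range]
    omega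
  · intro j _ _ j' _ _ h
    exact (Sigma.mk.inj_iff.1 h).2.eq
  · rintro ⟨k, j⟩ - hne
    have hn : p * t + 1 = k + p * j := by
      by_contra h
      simp [h] at hne
    have hjt : j ≤ t := by
      by_contra! h
      nlinarith
    obtain rfl : k = p * (t - j) + 1 := by have := hsplit j hjt; omega
    refine ⟨j, mem_range_succ_iff.2 hjt, ?_, rfl⟩
    rw [if_pos hn] at hne
    contrapose! hne
    linear_combination hne
  · intro j hj _
    simp only [hsplit j (mem_range_succ_iff.1 hj), if_true]
    ring

theorem SchroderEq.sub_mul_apply_eq_sum {K : Type*} [Field K] {p : ℕ} (hp : 2 ≤ p)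
    {lam a : K} {b : ℕ → K} (hS : SchroderEq lam (C lam * X + C a * X ^ (p + 1)) b) (u : ℕ) :
    (lam - lam ^ (p * (u + 1) + 1)) * b (p * (u + 1) + 1) =
      ∑ j ∈ range (u + 1), ((p * (u - j) + 1).choose (j + 1) : K) *
        lam ^ (p * (u - j) + 1 - (j + 1)) * a ^ (j + 1) * b (p * (u - j) + 1) := by
  rw [sub_mul, hS.recurrence hp, sum_range_succ']
  simp only [Nat.add_sub_add_right, Nat.sub_zero, Nat.choose_zero_right, Nat.cast_one, one_mul,
    pow_zero, mul_one]
  ring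

section SmallDivisors

variable {K : Type*} [NormedField K]

noncomputable def smallDivisorProd (lam : K) (t : ℕ) : ℝ :=
  ∏ i ∈ range t, ‖lam ^ (i + 1) - 1‖

theorem smallDivisorProd_succ (lam : K) (t : ℕ) :
    smallDivisorProd lam (t + 1) = smallDivisorProd lam t * ‖lam ^ (t + 1) - 1‖ :=
  prod_range_succ _ t

theorem smallDivisorProd_nonneg (lam : K) (t : ℕ) : 0 ≤ smallDivisorProd lam t :=
  prod_nonneg fun _ _ => norm_nonneg _

theorem smallDivisorProd_pos {lam : K} (hroot : ∀ n : ℕ, 1 ≤ n → lam ^ n ≠ 1) (t : ℕ) :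
    0 < smallDivisorProd lam t :=
  prod_pos fun i _ => norm_pos_iff.2 (sub_ne_zero.2 (hroot _ i.succ_pos))

theorem norm_pow_mul_sub_one_of_charP {p : ℕ} [Fact p.Prime] [CharP K p] (lam : K) (m : ℕ) :
    ‖lam ^ (p * m) - 1‖ = ‖lam ^ m - 1‖ ^ p := by
  rw [mul_comm, pow_mul, ← norm_pow, sub_pow_char, one_pow]

theorem norm_sub_pow_mul_add_one_of_charP {p : ℕ} [Fact p.Prime] [CharP K p] {lam : K}
    (hlam : ‖lam‖ = 1) (m : ℕ) :
    ‖lam - lam ^ (p * m + 1)‖ = ‖lam ^ m - 1‖ ^ p := by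
  rw [← norm_pow_mul_sub_one_of_charP, ← norm_neg, pow_succ, neg_sub, ← sub_one_mul, norm_mul,
    hlam, mul_one]

variable [IsUltrametricDist K]

theorem norm_pow_sub_one_le {lam : K} (hlam : ‖lam‖ ≤ 1) (m : ℕ) :
    ‖lam ^ m - 1‖ ≤ ‖lam - 1‖ := by
  rw [← geom_sum_mul, norm_mul]
  refine mul_le_of_le_one_left (norm_nonneg _) ?_
  exact IsUltrametricDist.norm_sum_le_of_forall_le_of_nonneg zero_le_one fun i _ => by
    simpa [norm_pow] using pow_le_one₀ (norm_nonneg lam) hlam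

theorem smallDivisorProd_strictAnti {lam : K} (hlam : ‖lam‖ ≤ 1)
    (hroot : ∀ n : ℕ, 1 ≤ n → lam ^ n ≠ 1) (hsmall : ‖lam - 1‖ < 1) :
    StrictAnti (smallDivisorProd lam) :=
  strictAnti_nat_of_succ_lt fun t => by
    rw [smallDivisorProd_succ]
    exact mul_lt_of_lt_one_right (smallDivisorProd_pos hroot t)
      ((norm_pow_sub_one_le hlam _).trans_lt hsmall)

theorem smallDivisorProd_add_le {lam : K} (hlam : ‖lam‖ ≤ 1) (m r : ℕ) :
    smallDivisorProd lam (m + r) ≤ smallDivisorProd lam m * ‖lam - 1‖ ^ r := by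
  rw [smallDivisorProd, prod_range_add]
  refine mul_le_mul_of_nonneg_left ?_ (smallDivisorProd_nonneg lam m)
  calc ∏ i ∈ range r, ‖lam ^ (m + i + 1) - 1‖ ≤ ∏ _i ∈ range r, ‖lam - 1‖ :=
        prod_le_prod (fun _ _ => norm_nonneg _) fun i _ => norm_pow_sub_one_le hlam _
    _ = ‖lam - 1‖ ^ r := by rw [prod_const, card_range]

theorem smallDivisorProd_mul_le {p : ℕ} [Fact p.Prime] [CharP K p] {lam : K} (hlam : ‖lam‖ ≤ 1)
    (N : ℕ) :
    smallDivisorProd lam (p * N) ≤ smallDivisorProd lam N ^ p * ‖lam - 1‖ ^ ((p - 1) * N) := by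
  have hp := (Fact.out : p.Prime).one_le
  induction N with
  | zero => simp [smallDivisorProd]
  | succ N ih =>
    have hsplit : p * (N + 1) = p * N + (p - 1) + 1 := by
      rw [mul_add_one, add_assoc, Nat.sub_add_cancel hp]
    calc smallDivisorProd lam (p * (N + 1))
        = smallDivisorProd lam (p * N + (p - 1)) * ‖lam ^ (p * (N + 1)) - 1‖ := by
          rw [hsplit, smallDivisorProd_succ]
      _ ≤ smallDivisorProd lam (p * N) * ‖lam - 1‖ ^ (p - 1) * ‖lam ^ (N + 1) - 1‖ ^ p := by
          rw [norm_pow_mul_sub_one_of_charP]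
          gcongr
          exact smallDivisorProd_add_le hlam _ _
      _ ≤ smallDivisorProd lam N ^ p * ‖lam - 1‖ ^ ((p - 1) * N) * ‖lam - 1‖ ^ (p - 1) *
            ‖lam ^ (N + 1) - 1‖ ^ p := by
          gcongr
      _ = smallDivisorProd lam (N + 1) ^ p * ‖lam - 1‖ ^ ((p - 1) * (N + 1)) := by
          rw [smallDivisorProd_succ, mul_pow, mul_add_one, pow_add]
          ring

theorem smallDivisorProd_pow_pow_le {p : ℕ} [Fact p.Prime] [CharP K p] {lam : K}
    (hlam : ‖lam‖ ≤ 1) (hsmall : ‖lam - 1‖ ≤ 1) (s : ℕ) :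
    smallDivisorProd lam (p ^ s) ^ p ≤ ‖lam - 1‖ ^ (s * p ^ s) := by
  have hp := (Fact.out : p.Prime).two_le
  induction s with
  | zero =>
    simpa [smallDivisorProd] using pow_le_one₀ (norm_nonneg _) hsmall
  | succ s ih =>
    calc smallDivisorProd lam (p ^ (s + 1)) ^ p
        ≤ (smallDivisorProd lam (p ^ s) ^ p * ‖lam - 1‖ ^ ((p - 1) * p ^ s)) ^ p := by
          rw [pow_succ']
          gcongr
          · exact smallDivisorProd_nonneg _ _
          · exact smallDivisorProd_mul_le hlam _
      _ ≤ (‖lam - 1‖ ^ (s * p ^ s) * ‖lam - 1‖ ^ ((p - 1) * p ^ s)) ^ p := by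
          have := smallDivisorProd_nonneg lam (p ^ s)
          gcongr
      _ = ‖lam - 1‖ ^ ((s + (p - 1)) * p ^ (s + 1)) := by
          rw [← pow_add, ← pow_mul, pow_succ]
          ring_nf
      _ ≤ ‖lam - 1‖ ^ ((s + 1) * p ^ (s + 1)) :=
          pow_le_pow_of_le_one (norm_nonneg _) hsmall (by gcongr; omega)

end SmallDivisors

theorem SchroderEq.norm_apply_mul_add_one {K : Type*} [NormedField K] [IsUltrametricDist K]
    {p : ℕ} [hp : Fact p.Prime] [CharP K p] {lam a : K} {b : ℕ → K}
    (hS : SchroderEq lam (C lam * X + C a * X ^ (p + 1)) b) (hlam : ‖lam‖ = 1)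
    (hroot : ∀ n : ℕ, 1 ≤ n → lam ^ n ≠ 1) (hsmall : ‖lam - 1‖ < 1) (ha : a ≠ 0)
    (hb1 : b 1 = 1) (t : ℕ) :
    ‖b (p * t + 1)‖ = ‖a‖ ^ t / smallDivisorProd lam t ^ p := by
  have hP : ∀ t, 0 < smallDivisorProd lam t ^ p := fun t => pow_pos (smallDivisorProd_pos hroot t) p
  induction t using Nat.strong_induction_on with
  | _ t ih =>
  rcases t with _ | u
  · simp [smallDivisorProd, hb1]
  have hrec := hS.sub_mul_apply_eq_sum hp.out.two_le u
  set term : ℕ → K := fun j => ((p * (u - j) + 1).choose (j + 1) : K) *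
    lam ^ (p * (u - j) + 1 - (j + 1)) * a ^ (j + 1) * b (p * (u - j) + 1) with hterm_def
  have hterm : ∀ j ≤ u, ‖term j‖ ≤ ‖a‖ ^ (u + 1) / smallDivisorProd lam (u - j) ^ p := by
    intro j hj
    rw [hterm_def, norm_mul, norm_mul, norm_mul, norm_pow, hlam, one_pow, mul_one, norm_pow,
      ih (u - j) (by omega), mul_div_assoc', mul_assoc, ← pow_add,
      show j + 1 + (u - j) = u + 1 by omega]
    exact div_le_div_of_nonneg_right
      (mul_le_of_le_one_left (by positivity) (IsUltrametricDist.norm_natCast_le_one K _)) (hP _).le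
  have hterm0 : ‖term 0‖ = ‖a‖ ^ (u + 1) / smallDivisorProd lam u ^ p := by
    have hchoose : ((p * u + 1).choose 1 : K) = 1 := by simp
    simp only [hterm_def, Nat.sub_zero, hchoose, norm_mul, norm_pow, hlam, one_pow, norm_one,
      ih u (by omega)]
    ring
  have htail : ∀ j ∈ range u, ‖term (j + 1)‖ < ‖term 0‖ := by
    intro j hj
    rw [mem_range] at hj
    refine (hterm (j + 1) hj).trans_lt ?_
    rw [hterm0]
    exact div_lt_div_of_pos_left (by positivity) (hP u) (pow_lt_pow_left₀
      (smallDivisorProd_strictAnti hlam.le hroot hsmall (by omega))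
      (smallDivisorProd_nonneg _ _) hp.out.ne_zero)
  have hnorm := congrArg norm hrec
  rw [norm_mul, norm_sub_pow_mul_add_one_of_charP hlam, sum_range_succ', add_comm _ (term 0),
    IsUltrametricDist.norm_add_sum_eq_of_forall_norm_lt htail, hterm0] at hnorm
  rw [smallDivisorProd_succ, mul_pow, ← div_div, eq_div_iff, mul_comm, hnorm]
  exact pow_ne_zero _ (norm_ne_zero_iff.2 (sub_ne_zero.2 (hroot _ u.succ_pos)))

theorem SchroderEq.norm_le_norm_apply_mul_pow {K : Type*} [NormedField K] [IsUltrametricDist K]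
    {p : ℕ} [Fact p.Prime] [CharP K p] {lam a : K} {b : ℕ → K}
    (hS : SchroderEq lam (C lam * X + C a * X ^ (p + 1)) b) (hlam : ‖lam‖ = 1)
    (hroot : ∀ n : ℕ, 1 ≤ n → lam ^ n ≠ 1) (hsmall : ‖lam - 1‖ < 1) (ha : a ≠ 0)
    (hb1 : b 1 = 1) (x : K) {s : ℕ} (hs : ‖lam - 1‖ ^ s ≤ ‖a‖ * ‖x‖ ^ p) :
    ‖x‖ ≤ ‖b (p * p ^ s + 1) * x ^ (p * p ^ s + 1)‖ := by
  have hP := pow_pos (smallDivisorProd_pos hroot (p ^ s)) p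
  have hdiv : smallDivisorProd lam (p ^ s) ^ p ≤ ‖a‖ ^ p ^ s * ‖x‖ ^ (p * p ^ s) :=
    calc smallDivisorProd lam (p ^ s) ^ p ≤ ‖lam - 1‖ ^ (s * p ^ s) :=
          smallDivisorProd_pow_pow_le hlam.le hsmall.le s
      _ = (‖lam - 1‖ ^ s) ^ p ^ s := pow_mul _ _ _
      _ ≤ (‖a‖ * ‖x‖ ^ p) ^ p ^ s := by gcongr
      _ = ‖a‖ ^ p ^ s * ‖x‖ ^ (p * p ^ s) := by rw [mul_pow, ← pow_mul]
  rw [norm_mul, norm_pow, hS.norm_apply_mul_add_one hlam hroot hsmall ha hb1, pow_succ,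
    div_mul_eq_mul_div, le_div_iff₀ hP, ← mul_assoc, mul_comm]
  exact mul_le_mul_of_nonneg_right hdiv (norm_nonneg x)

theorem schroder_divergence_p_plus_one_general {K : Type*} [NontriviallyNormedField K]
    [IsUltrametricDist K] (p : ℕ) (hp : p.Prime) [CharP K p]
    (lam : K) (hlam : ‖lam‖ = 1) (hroot : ∀ n : ℕ, 1 ≤ n → lam ^ n ≠ 1)
    (hsmall : ‖1 - lam‖ < 1)
    (a : K) (ha : a ≠ 0)
    (b : ℕ → K) (hb1 : b 1 = 1)
    (hS : SchroderEq lam (PowerSeries.C lam * PowerSeries.X +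
      PowerSeries.C a * PowerSeries.X ^ (p + 1)) b) :
    ∀ x : K, x ≠ 0 →
      ¬ Filter.Tendsto (fun k : ℕ => b k * x ^ k) Filter.atTop (nhds 0) := by
  intro x hx hT
  have : Fact p.Prime := ⟨hp⟩
  rw [norm_sub_rev] at hsmall
  obtain ⟨M, hM⟩ := eventually_atTop.1 <|
    (tendsto_pow_atTop_nhds_zero_of_lt_one (norm_nonneg _) hsmall).eventually_le_const
      (by positivity : 0 < ‖a‖ * ‖x‖ ^ p)
  have hsub : Tendsto (fun s => b (p * p ^ s + 1) * x ^ (p * p ^ s + 1)) atTop (nhds 0) :=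
    hT.comp <| tendsto_atTop_mono (fun s => (Nat.lt_pow_self hp.one_lt).le.trans
      ((Nat.le_mul_of_pos_left _ hp.pos).trans (Nat.le_succ _))) tendsto_id
  obtain ⟨s, hs_small, hsM⟩ :=
    ((norm_zero (E := K) ▸ hsub.norm).eventually (gt_mem_nhds (norm_pos_iff.2 hx))).and
      (eventually_ge_atTop M) |>.exists
  exact hs_small.not_ge (hS.norm_le_norm_apply_mul_pow hlam hroot hsmall ha hb1 x (hM s hsM))

/-- Let `K` be a complete non-Archimedean valued field of characteristic `p > 0` and
`f(x) = λx + a x^{p+1}` with `a ≠ 0`, `‖λ‖ = 1` and `‖1 - λ‖ < 1`.  Then the formal conjugacy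
`g = ∑ b_k xᵏ` solving `g ∘ f = λ·g` has radius of convergence zero: for every `x ≠ 0` the
terms `b_k xᵏ` do not tend to `0`, so `f` is not analytically linearizable at `0`. -/
theorem schroder_divergence_p_plus_one {K : Type*} [NontriviallyNormedField K]
    [IsUltrametricDist K] [CompleteSpace K] (p : ℕ) (hp : p.Prime) [CharP K p]
    (lam : K) (hlam : ‖lam‖ = 1) (hroot : ∀ n : ℕ, 1 ≤ n → lam ^ n ≠ 1)
    (hsmall : ‖1 - lam‖ < 1)
    (a : K) (ha : a ≠ 0)
    (b : ℕ → K) (hb0 : b 0 = 0) (hb1 : b 1 = 1)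
    (hS : SchroderEq lam (PowerSeries.C lam * PowerSeries.X +
      PowerSeries.C a * PowerSeries.X ^ (p + 1)) b) :
    ∀ x : K, x ≠ 0 →
      ¬ Filter.Tendsto (fun k : ℕ => b k * x ^ k) Filter.atTop (nhds 0) :=
  schroder_divergence_p_plus_one_general p hp lam hlam hroot hsmall a ha b hb1 hS
end

section
/- Let K be a complete non-Archimedean valued field of characteristic p > 0, λ ∈ K with |λ| = 1 not a root of unity, and f(x) = λx + Σ_{p | i} a_i x^i a formal power series whose nonlinear monomials all have degree divisible by p. Then the formal conjugacy g(x) = x + Σ_{k≥2} b_k x^k solving g∘f = λg satisfies b_k = 0 whenever p does not divide k (for k ≥ 2). -/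
/-!
In characteristic `p` the derivative of `F ^ k` vanishes when `p ∣ k`, so `F ^ k` has no
monomials of degree prime to `p`. Hence, for `p ∤ n`, the only terms `b k · F ^ k` (`k < n`)
of `g ∘ F` that could contribute to `xⁿ` are `k = 1`, excluded by the shape of `F`, and
`p ∤ k`, where `b k = 0` by induction. Comparing coefficients of `xⁿ` then leaves
`b n λⁿ = λ b n`, and since `λⁿ⁻¹ ≠ 1` this forces `b n = 0`.
-/

open PowerSeries

namespace PowerSeries

theorem coeff_pow_eq_zero_of_dvd {R : Type*} [CommRing R] [NoZeroDivisors R] (p : ℕ) [CharP R p]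
    (φ : R⟦X⟧) {k n : ℕ} (hk : p ∣ k) (hn : ¬ p ∣ n) : coeff n (φ ^ k) = 0 := by
  obtain ⟨m, rfl⟩ : ∃ m, n = m + 1 := Nat.exists_eq_succ_of_ne_zero
    (by rintro rfl; exact hn (dvd_zero p))
  have hderiv : d⁄dX R (φ ^ k) = 0 := by
    rw [derivative_pow, ← map_natCast (C (R := R)) k, (CharP.cast_eq_zero_iff R p k).mpr hk,
      map_zero, zero_mul, zero_mul]
  have hm : ((m + 1 : ℕ) : R) ≠ 0 := mt (CharP.cast_eq_zero_iff R p _).mp hn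
  have := coeff_derivative (φ ^ k) m
  rw [hderiv, map_zero, eq_comm] at this
  exact (mul_eq_zero.mp this).resolve_right (mod_cast hm)

theorem coeff_self_pow_of_constantCoeff_eq_zero {R : Type*} [CommSemiring R] {φ : R⟦X⟧}
    (hφ : constantCoeff φ = 0) (n : ℕ) : coeff n (φ ^ n) = coeff 1 φ ^ n := by
  obtain ⟨ψ, rfl⟩ := X_dvd_iff.mpr hφ
  simp [mul_pow, coeff_X_pow_mul', coeff_zero_eq_constantCoeff_apply]

end PowerSeries

theorem SchroderEq.mul_coeff_pow_eq {K : Type*} [Field K] {lam : K} {F : K⟦X⟧} {b : ℕ → K}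
    (hS : SchroderEq lam F b) (hF0 : coeff 0 F = 0) {n : ℕ}
    (hlow : ∀ k < n, coeff n (C (b k) * F ^ k) = 0) : b n * coeff 1 F ^ n = lam * b n := by
  have h := hS n
  rwa [map_sum, Finset.sum_range_succ,
    Finset.sum_eq_zero fun k hk => hlow k (Finset.mem_range.mp hk), zero_add, coeff_C_mul,
    coeff_self_pow_of_constantCoeff_eq_zero (by rwa [← coeff_zero_eq_constantCoeff_apply])] at h

theorem eq_zero_of_mul_pow_succ_eq {K : Type*} [Field K] {a lam : K} {n : ℕ} (h0 : lam ≠ 0)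
    (hn : lam ^ n ≠ 1) (h : a * lam ^ (n + 1) = lam * a) : a = 0 := by
  have : lam * a * (lam ^ n - 1) = 0 := by linear_combination h
  simpa [h0, sub_eq_zero, hn] using this

theorem schroder_coeff_vanish_of_not_dvd_general {K : Type*} [NontriviallyNormedField K]
    (p : ℕ) [CharP K p]
    (lam : K) (hlam : ‖lam‖ = 1) (hroot : ∀ n : ℕ, 1 ≤ n → lam ^ n ≠ 1)
    (F : PowerSeries K) (hF0 : PowerSeries.coeff 0 F = 0)
    (hF1 : PowerSeries.coeff 1 F = lam)
    (hFdvd : ∀ i : ℕ, 2 ≤ i → PowerSeries.coeff i F ≠ 0 → p ∣ i)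
    (b : ℕ → K)
    (hS : SchroderEq lam F b) :
    ∀ k : ℕ, 2 ≤ k → ¬ p ∣ k → b k = 0 := by
  have hlam0 : lam ≠ 0 := norm_ne_zero_iff.mp (by simp [hlam])
  intro n
  induction n using Nat.strong_induction_on with
  | _ n IH =>
  intro hn hpn
  have hlow : ∀ k < n, coeff n (C (b k) * F ^ k) = 0 := by
    intro k hk
    rw [coeff_C_mul]
    -- this case includes `k = 0`
    by_cases hpk : p ∣ k
    · rw [coeff_pow_eq_zero_of_dvd p F hpk hpn, mul_zero]
    obtain rfl | hk1 := eq_or_ne k 1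
    · rw [pow_one, not_not.mp (mt (hFdvd n hn) hpn), mul_zero]
    · have hk0 : k ≠ 0 := by rintro rfl; exact hpk (dvd_zero p)
      rw [IH k hk (by omega) hpk, zero_mul]
  have hdiag := hS.mul_coeff_pow_eq hF0 hlow
  obtain ⟨m, rfl⟩ : ∃ m, n = m + 1 := ⟨n - 1, by omega⟩
  rw [hF1] at hdiag
  exact eq_zero_of_mul_pow_succ_eq hlam0 (hroot m (by omega)) hdiag

/-- Let `K` be a complete non-Archimedean valued field of characteristic `p > 0`, `λ` with
`‖λ‖ = 1` not a root of unity, and `f(x) = λx + ∑_{p ∣ i} aᵢ xⁱ` a formal power series whose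
nonlinear monomials all have degree divisible by `p`.  Then the formal conjugacy
`g(x) = x + ∑_{k ≥ 2} b_k xᵏ` solving `g ∘ f = λ·g` satisfies `b_k = 0` whenever `p ∤ k`
(for `k ≥ 2`). -/
theorem schroder_coeff_vanish_of_not_dvd {K : Type*} [NontriviallyNormedField K]
    [IsUltrametricDist K] [CompleteSpace K] (p : ℕ) (hp : p.Prime) [CharP K p]
    (lam : K) (hlam : ‖lam‖ = 1) (hroot : ∀ n : ℕ, 1 ≤ n → lam ^ n ≠ 1)
    (F : PowerSeries K) (hF0 : PowerSeries.coeff 0 F = 0)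
    (hF1 : PowerSeries.coeff 1 F = lam)
    (hFdvd : ∀ i : ℕ, 2 ≤ i → PowerSeries.coeff i F ≠ 0 → p ∣ i)
    (b : ℕ → K) (hb0 : b 0 = 0) (hb1 : b 1 = 1)
    (hS : SchroderEq lam F b) :
    ∀ k : ℕ, 2 ≤ k → ¬ p ∣ k → b k = 0 :=
  schroder_coeff_vanish_of_not_dvd_general p lam hlam hroot F hF0 hF1 hFdvd b hS
end

section
/- Let p be a prime, m a positive integer with p ∤ m, and k' the least positive integer with p | k' and m | k'-1. Then k' - 1 < mp, and the function δ(k) = ⌊(k-k')/(mp) + 1⌋/(k-1) on integers k ≥ 2 (with δ(k) = 0 for k < k') attains its maximum value 1/(k'-1) exactly at k = k'. -/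
/-!
Since `m * p` has both divisibility properties, `k' - m * p` would be a smaller admissible
value if `k' - 1 ≥ m * p`; hence `k' - 1 < m * p`.  For `k > k'` write `q = ⌊(k - k') / (m p)⌋`;
then `(k' - 1) q ≤ m p q ≤ k - k'`, with strict inequality when `q > 0`, so
`(k' - 1)(q + 1) < k - 1`, i.e. `δ(k) < 1 / (k' - 1)`.
-/

/-- The function `δ` of the statement, with period `n = m * p`. -/
noncomputable def delta (n k' k : ℕ) : ℝ :=
  if k < k' then 0 else (((k - k') / n + 1 : ℕ) : ℝ) / ((k : ℝ) - 1)

theorem sub_one_lt_mul_of_minimal {p m k' : ℕ} (hmp : 0 < m * p) (hk'p : p ∣ k')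
    (hk'm : m ∣ k' - 1) (hk'min : ∀ l : ℕ, 0 < l → p ∣ l → m ∣ l - 1 → k' ≤ l) :
    k' - 1 < m * p := by
  by_contra! h
  have hsub_p : p ∣ k' - m * p := Nat.dvd_sub hk'p (dvd_mul_left p m)
  have hsub_m : m ∣ k' - m * p - 1 := by
    rw [Nat.sub_right_comm]
    exact Nat.dvd_sub hk'm (dvd_mul_right m p)
  have := hk'min _ (by omega) hsub_p hsub_m
  omega

theorem sub_one_mul_div_add_one_lt {n k' k : ℕ} (hk' : 0 < k') (hn : k' - 1 < n) (hk : k' < k) :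
    (k' - 1) * ((k - k') / n + 1) < k - 1 := by
  set q := (k - k') / n
  have hqn : q * n ≤ k - k' := Nat.div_mul_le_self _ _
  rcases Nat.eq_zero_or_pos q with hq | hq
  · rw [hq]; omega
  · have : (k' - 1) * q < q * n := by
      rw [mul_comm q]; exact Nat.mul_lt_mul_of_lt_of_le hn le_rfl hq
    rw [mul_add_one]
    omega

theorem delta_self (n k' : ℕ) : delta n k' k' = 1 / ((k' : ℝ) - 1) := by
  simp [delta]

theorem delta_lt_of_lt {n k' k : ℕ} (hk' : 2 ≤ k') (hk : k < k') :
    delta n k' k < 1 / ((k' : ℝ) - 1) := by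
  have : (1 : ℝ) < k' := by exact_mod_cast hk'
  rw [delta, if_pos hk]
  exact one_div_pos.mpr (by linarith)

theorem delta_lt_of_gt {n k' k : ℕ} (hk' : 2 ≤ k') (hn : k' - 1 < n) (hk : k' < k) :
    delta n k' k < 1 / ((k' : ℝ) - 1) := by
  have hkey := sub_one_mul_div_add_one_lt (by omega) hn hk
  have hk'1 : (1 : ℝ) < k' := by exact_mod_cast hk'
  have hk1 : (1 : ℝ) < k := by exact_mod_cast (by omega : 1 < k)
  rw [delta, if_neg (by omega), div_lt_div_iff₀ (by linarith) (by linarith)]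
  have : ((k' - 1 : ℕ) : ℝ) * ((k - k') / n + 1 : ℕ) < ((k - 1 : ℕ) : ℝ) := by
    exact_mod_cast hkey
  push_cast [Nat.cast_sub (by omega : 1 ≤ k'), Nat.cast_sub (by omega : 1 ≤ k)] at this ⊢
  linarith

theorem delta_max_at_k'_general (p m k' : ℕ) (hp : p.Prime) (hm : 0 < m)
    (hk'pos : 0 < k') (hk'p : p ∣ k') (hk'm : m ∣ k' - 1)
    (hk'min : ∀ l : ℕ, 0 < l → p ∣ l → m ∣ l - 1 → k' ≤ l) :
    k' - 1 < m * p ∧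
      (fun k : ℕ => if k < k' then (0 : ℝ)
          else (((k - k') / (m * p) + 1 : ℕ) : ℝ) / ((k : ℝ) - 1)) k' = 1 / ((k' : ℝ) - 1) ∧
      ∀ k : ℕ, 2 ≤ k → k ≠ k' →
        (if k < k' then (0 : ℝ)
          else (((k - k') / (m * p) + 1 : ℕ) : ℝ) / ((k : ℝ) - 1)) < 1 / ((k' : ℝ) - 1) := by
  have hk'2 : 2 ≤ k' := hp.two_le.trans (Nat.le_of_dvd hk'pos hk'p)
  have hlt : k' - 1 < m * p :=
    sub_one_lt_mul_of_minimal (Nat.mul_pos hm hp.pos) hk'p hk'm hk'min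
  refine ⟨hlt, delta_self (m * p) k', fun k _ hne => ?_⟩
  rcases hne.lt_or_gt with hk | hk
  · exact delta_lt_of_lt hk'2 hk
  · exact delta_lt_of_gt hk'2 hlt hk

/-- Let `p` be a prime, `m` a positive integer with `p ∤ m`, and `k'` the least positive
integer with `p ∣ k'` and `m ∣ k' - 1`.  Then `k' - 1 < mp`, and the function
`δ(k) = ⌊(k-k')/(mp) + 1⌋/(k-1)` on integers `k ≥ 2` (with `δ(k) = 0` for `k < k'`) attains
its maximum value `1/(k'-1)` exactly at `k = k'`. -/
theorem delta_max_at_k' (p m k' : ℕ) (hp : p.Prime) (hm : 0 < m) (hpm : ¬ p ∣ m)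
    (hk'pos : 0 < k') (hk'p : p ∣ k') (hk'm : m ∣ k' - 1)
    (hk'min : ∀ l : ℕ, 0 < l → p ∣ l → m ∣ l - 1 → k' ≤ l) :
    k' - 1 < m * p ∧
      (fun k : ℕ => if k < k' then (0 : ℝ)
          else (((k - k') / (m * p) + 1 : ℕ) : ℝ) / ((k : ℝ) - 1)) k' = 1 / ((k' : ℝ) - 1) ∧
      ∀ k : ℕ, 2 ≤ k → k ≠ k' →
        (if k < k' then (0 : ℝ)
          else (((k - k') / (m * p) + 1 : ℕ) : ℝ) / ((k : ℝ) - 1)) < 1 / ((k' : ℝ) - 1) :=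
  delta_max_at_k'_general p m k' hp hm hk'pos hk'p hk'm hk'min
end

section
/- Let K be a complete algebraically closed non-Archimedean valued field and h(x) = Σ_{k≥1} c_k x^k a power series converging on the rational open disc D_R(0), with c_1 ≠ 0. If 0 < r ≤ R and |c_k| r^k ≤ |c_1| r for all k ≥ 2, then h maps the open disc D_r(0) bijectively onto D_{|c_1|r}(0). -/
/-!
Write `h x = c₁ x + T x`. The domination hypothesis makes the tail `T` Lipschitz on the closed
disc of radius `s < r` with constant `|c₁| s / r < |c₁|`. By the ultrametric inequality the linear
term then dominates every difference, `|h x - h y| = |c₁| |x - y|`, which gives injectivity and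
`|h x| = |c₁| |x|`. Surjectivity onto `D_{|c₁| r}` comes from Banach's fixed point theorem applied
to `x ↦ c₁⁻¹ (y - T x)` on the closed disc of radius `|y| / |c₁|`.
-/

open IsUltrametricDist Metric Set
open scoped NNReal

section PerturbedScaling

variable {𝕜 E : Type*} [NormedField 𝕜] [NormedAddCommGroup E] [NormedSpace 𝕜 E]
  [IsUltrametricDist E] {f : E → E} {a : 𝕜} {K : ℝ≥0}

theorem norm_sub_eq_of_lipschitzOnWith_sub_smul {s : Set E} (hK : K < ‖a‖₊)
    (hf : LipschitzOnWith K (fun x => f x - a • x) s) {x y : E} (hx : x ∈ s) (hy : y ∈ s) :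
    ‖f x - f y‖ = ‖a‖ * ‖x - y‖ := by
  rcases eq_or_ne x y with rfl | hxy
  · simp
  have hsplit : f x - f y = a • (x - y) + ((f x - a • x) - (f y - a • y)) := by
    rw [smul_sub]; abel
  have hsmall : ‖(f x - a • x) - (f y - a • y)‖ < ‖a • (x - y)‖ := by
    rw [norm_smul]
    calc _ ≤ K * ‖x - y‖ := hf.norm_sub_le hx hy
      _ < ‖a‖ * ‖x - y‖ :=
        mul_lt_mul_of_pos_right (by exact_mod_cast hK) (norm_pos_iff.2 (sub_ne_zero.2 hxy))
  rw [hsplit, norm_add_eq_max_of_norm_ne_norm hsmall.ne', max_eq_left hsmall.le, norm_smul]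

theorem exists_eq_of_lipschitzOnWith_sub_smul [CompleteSpace E] (hK : K < ‖a‖₊) (hf0 : f 0 = 0)
    {ρ : ℝ} (hf : LipschitzOnWith K (fun x => f x - a • x) (closedBall 0 ρ)) {y : E}
    (hy : ‖y‖ ≤ ‖a‖ * ρ) : ∃ x ∈ closedBall 0 ρ, f x = y := by
  have ha : 0 < ‖a‖ := NNReal.coe_pos.2 (pos_of_gt hK)
  have hρ : 0 ≤ ρ := nonneg_of_mul_nonneg_right ((norm_nonneg y).trans hy) ha
  set T : E → E := fun x => f x - a • x
  set g : E → E := fun x => a⁻¹ • (y - T x)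
  have hT : ∀ x ∈ closedBall (0 : E) ρ, ‖T x‖ ≤ ‖a‖ * ρ := fun x hx => by
    have hT0 : T 0 = 0 := by simp [T, hf0]
    calc ‖T x‖ = ‖T x - T 0‖ := by rw [hT0, sub_zero]
      _ ≤ K * ‖x - 0‖ := hf.norm_sub_le hx (mem_closedBall_self hρ)
      _ ≤ ‖a‖ * ρ := by
        rw [sub_zero]
        exact mul_le_mul hK.le (mem_closedBall_zero_iff.1 hx) (norm_nonneg x) ha.le
  have hmaps : MapsTo g (closedBall 0 ρ) (closedBall 0 ρ) := fun x hx => by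
    rw [mem_closedBall_zero_iff, norm_smul, norm_inv, inv_mul_le_iff₀ ha, sub_eq_add_neg]
    exact (norm_add_le_max _ _).trans (max_le hy ((norm_neg (T x)).trans_le (hT x hx)))
  have hgLip : ∀ x ∈ closedBall (0 : E) ρ, ∀ x' ∈ closedBall (0 : E) ρ,
      ‖g x - g x'‖ ≤ (K / ‖a‖₊ : ℝ≥0) * ‖x - x'‖ := fun x hx x' hx' =>
    calc ‖g x - g x'‖ = ‖a‖⁻¹ * ‖T x - T x'‖ := by
          rw [← smul_sub, norm_smul, norm_inv, sub_sub_sub_cancel_left, norm_sub_rev]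
      _ ≤ ‖a‖⁻¹ * (K * ‖x - x'‖) := by gcongr; exact hf.norm_sub_le hx hx'
      _ = (K / ‖a‖₊ : ℝ≥0) * ‖x - x'‖ := by push_cast; ring
  have hg : ContractingWith (K / ‖a‖₊) (hmaps.restrict g _ _) :=
    ⟨NNReal.div_lt_one_of_lt hK, LipschitzWith.of_dist_le_mul fun x x' => by
      simpa only [Subtype.dist_eq, dist_eq_norm, hmaps.val_restrict_apply] using
        hgLip x x.2 x' x'.2⟩
  obtain ⟨x, hx, hfix, -⟩ := hg.exists_fixedPoint' isClosed_closedBall.isComplete hmaps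
    (mem_closedBall_self hρ) (edist_ne_top _ _)
  refine ⟨x, hx, ?_⟩
  have hax : a • x = y - T x := by
    conv_lhs => rw [← hfix.eq]
    exact smul_inv_smul₀ (norm_pos_iff.1 ha) _
  rwa [eq_sub_iff_add_eq, add_sub_cancel] at hax

theorem bijOn_ball_of_lipschitzOnWith_sub_smul [CompleteSpace E] {r : ℝ} (hf0 : f 0 = 0)
    (hf : ∀ s ∈ Ico 0 r, ∃ K < ‖a‖₊, LipschitzOnWith K (fun x => f x - a • x) (closedBall 0 s)) :
    BijOn f (ball 0 r) (ball 0 (‖a‖ * r)) := by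
  have ha : ∀ s ∈ Ico 0 r, 0 < ‖a‖ := fun s hs => by
    obtain ⟨K, hK, -⟩ := hf s hs
    exact NNReal.coe_pos.2 (pos_of_gt hK)
  refine ⟨fun x hx => ?_, fun x hx y hy hxy => ?_, fun y hy => ?_⟩
  · rw [mem_ball_zero_iff] at hx ⊢
    have hs : ‖x‖ ∈ Ico 0 r := ⟨norm_nonneg x, hx⟩
    obtain ⟨K, hK, hfK⟩ := hf _ hs
    have hnorm := norm_sub_eq_of_lipschitzOnWith_sub_smul hK hfK
      (mem_closedBall_zero_iff.2 le_rfl) (mem_closedBall_self (norm_nonneg x))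
    rw [hf0, sub_zero, sub_zero] at hnorm
    exact hnorm ▸ mul_lt_mul_of_pos_left hx (ha _ hs)
  · rw [mem_ball_zero_iff] at hx hy
    have hs : max ‖x‖ ‖y‖ ∈ Ico 0 r := ⟨(norm_nonneg x).trans (le_max_left _ _), max_lt hx hy⟩
    obtain ⟨K, hK, hfK⟩ := hf _ hs
    have hnorm := norm_sub_eq_of_lipschitzOnWith_sub_smul hK hfK
      (mem_closedBall_zero_iff.2 (le_max_left _ _)) (mem_closedBall_zero_iff.2 (le_max_right _ _))
    rw [hxy, sub_self, norm_zero, eq_comm, mul_eq_zero, norm_eq_zero, norm_eq_zero,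
      sub_eq_zero] at hnorm
    exact hnorm.resolve_left (norm_pos_iff.1 (ha _ hs))
  · rw [mem_ball_zero_iff] at hy
    have ha' : 0 < ‖a‖ :=
      ha 0 ⟨le_rfl, pos_of_mul_pos_right ((norm_nonneg y).trans_lt hy) (norm_nonneg a)⟩
    have hs : ‖y‖ / ‖a‖ ∈ Ico 0 r := ⟨by positivity, (div_lt_iff₀' ha').2 hy⟩
    obtain ⟨K, hK, hfK⟩ := hf _ hs
    obtain ⟨x, hx, rfl⟩ := exists_eq_of_lipschitzOnWith_sub_smul hK hf0 hfK
      (by rw [mul_div_cancel₀ _ ha'.ne'])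
    exact mem_image_of_mem f (closedBall_subset_ball hs.2 hx)

end PerturbedScaling

theorem mul_pow_le_mul_div_of_mul_pow_le {a b r s : ℝ} {n : ℕ} (hb : 0 ≤ b) (hs : 0 ≤ s)
    (hsr : s < r) (h : b * r ^ (n + 2) ≤ a * r) : b * s ^ (n + 1) ≤ a * (s / r) := by
  have hr : 0 < r := hs.trans_lt hsr
  have ht : s / r ≤ 1 := (div_le_one hr).2 hsr.le
  have hbr : b * r ^ (n + 1) ≤ a := by
    rw [pow_succ _ (n + 1), ← mul_assoc] at h
    exact le_of_mul_le_mul_right h hr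
  calc b * s ^ (n + 1) = b * r ^ (n + 1) * (s / r) ^ (n + 1) := by
        rw [div_pow, mul_assoc, mul_div_cancel₀ _ (pow_pos hr _).ne']
    _ ≤ a * (s / r) ^ (n + 1) := by gcongr
    _ ≤ a * (s / r) := by
        gcongr
        · exact (mul_nonneg hb (pow_nonneg hr.le _)).trans hbr
        · exact pow_le_of_le_one (by positivity) ht (Nat.succ_ne_zero n)

section PowerSeries

variable {𝕜 : Type*} [NormedField 𝕜] [IsUltrametricDist 𝕜]

theorem norm_pow_succ_sub_pow_succ_le {x y : 𝕜} {s : ℝ} (hx : ‖x‖ ≤ s) (hy : ‖y‖ ≤ s) (n : ℕ) :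
    ‖x ^ (n + 1) - y ^ (n + 1)‖ ≤ s ^ n * ‖x - y‖ := by
  have hs : 0 ≤ s := (norm_nonneg x).trans hx
  rw [← geom_sum₂_mul, norm_mul]
  refine mul_le_mul_of_nonneg_right ?_ (norm_nonneg _)
  refine norm_sum_le_of_forall_le_of_nonneg (pow_nonneg hs n) fun i hi => ?_
  have hi : i + (n - i) = n := Nat.add_sub_cancel' (Nat.lt_succ_iff.1 (Finset.mem_range.1 hi))
  calc ‖x ^ i * y ^ (n + 1 - 1 - i)‖ = ‖x‖ ^ i * ‖y‖ ^ (n - i) := by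
        rw [norm_mul, norm_pow, norm_pow, Nat.add_sub_cancel]
    _ ≤ s ^ i * s ^ (n - i) := by gcongr
    _ = s ^ n := by rw [← pow_add, hi]

theorem lipschitzOnWith_tsum_mul_pow {d : ℕ → 𝕜} {s : ℝ} {L : ℝ≥0}
    (hsum : ∀ x ∈ closedBall (0 : 𝕜) s, Summable fun n => d n * x ^ n)
    (hd : ∀ n, ‖d (n + 1)‖ * s ^ n ≤ L) :
    LipschitzOnWith L (fun x => ∑' n, d n * x ^ n) (closedBall 0 s) := by
  refine lipschitzOnWith_iff_norm_sub_le.2 fun x hx y hy => ?_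
  rw [← (hsum x hx).tsum_sub (hsum y hy)]
  rw [mem_closedBall_zero_iff] at hx hy
  refine norm_tsum_le_of_forall_le_of_nonneg (by positivity) fun n => ?_
  rw [← mul_sub, norm_mul]
  cases n with
  | zero => simp only [pow_zero, sub_self, norm_zero, mul_zero]; positivity
  | succ n =>
    calc ‖d (n + 1)‖ * ‖x ^ (n + 1) - y ^ (n + 1)‖ ≤ ‖d (n + 1)‖ * (s ^ n * ‖x - y‖) := by
          gcongr; exact norm_pow_succ_sub_pow_succ_le hx hy n
      _ = ‖d (n + 1)‖ * s ^ n * ‖x - y‖ := by ring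
      _ ≤ L * ‖x - y‖ := by gcongr; exact hd n

theorem HasSum.update_mul_pow {c : ℕ → 𝕜} {x a : 𝕜} (hc : HasSum (fun n => c n * x ^ n) a)
    (m : ℕ) : HasSum (fun n => Function.update c m 0 n * x ^ n) (a - c m * x ^ m) := by
  have hfun : (fun n => Function.update c m 0 n * x ^ n) =
      Function.update (fun n => c n * x ^ n) m 0 := by
    ext n
    rcases eq_or_ne n m with rfl | hn <;> simp [*]
  rw [hfun, sub_eq_neg_add, ← zero_sub]
  exact hc.update m 0

theorem exists_lipschitzOnWith_tsum_mul_pow_sub_smul {c : ℕ → 𝕜} {r s : ℝ} (hc1 : c 1 ≠ 0)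
    (hdom : ∀ k, 2 ≤ k → ‖c k‖ * r ^ k ≤ ‖c 1‖ * r) (hs : s ∈ Ico 0 r)
    (hsum : ∀ x ∈ closedBall (0 : 𝕜) s, Summable fun n => c n * x ^ n) :
    ∃ K < ‖c 1‖₊, LipschitzOnWith K (fun x => ∑' n, c n * x ^ n - c 1 • x) (closedBall 0 s) := by
  have hr : 0 < r := hs.1.trans_lt hs.2
  have hK : ‖c 1‖ * (s / r) < ‖c 1‖ :=
    mul_lt_of_lt_one_right (norm_pos_iff.2 hc1) ((div_lt_one hr).2 hs.2)
  have hK0 : 0 ≤ ‖c 1‖ * (s / r) := mul_nonneg (norm_nonneg _) (div_nonneg hs.1 hr.le)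
  have htail : ∀ x ∈ closedBall (0 : 𝕜) s,
      HasSum (fun n => Function.update c 1 0 n * x ^ n) (∑' n, c n * x ^ n - c 1 • x) :=
    fun x hx => by simpa using (hsum x hx).hasSum.update_mul_pow 1
  have hcoeff : ∀ n, ‖Function.update c 1 0 (n + 1)‖ * s ^ n ≤ (‖c 1‖ * (s / r)).toNNReal := by
    rintro (_ | n)
    · simp
    · rw [Function.update_of_ne (by omega), Real.coe_toNNReal _ hK0]
      exact mul_pow_le_mul_div_of_mul_pow_le (norm_nonneg _) hs.1 hs.2 (hdom (n + 2) (by omega))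
  refine ⟨_, (Real.toNNReal_lt_iff_lt_coe hK0).2 hK, fun x hx y hy => ?_⟩
  have hlip := lipschitzOnWith_tsum_mul_pow (fun x hx => (htail x hx).summable) hcoeff hx hy
  simp only at hlip ⊢
  rwa [(htail x hx).tsum_eq, (htail y hy).tsum_eq] at hlip

end PowerSeries

theorem power_series_bijOn_open_disc_general {K : Type*} [NontriviallyNormedField K]
    [IsUltrametricDist K] [CompleteSpace K]
    (c : ℕ → K) (hc0 : c 0 = 0) (hc1 : c 1 ≠ 0)
    (R : ℝ)
    (hconv : ∀ x : K, ‖x‖ < R → Summable fun k : ℕ => c k * x ^ k)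
    (r : ℝ) (hrR : r ≤ R)
    (hdom : ∀ k : ℕ, 2 ≤ k → ‖c k‖ * r ^ k ≤ ‖c 1‖ * r) :
    Set.BijOn (fun x : K => ∑' k : ℕ, c k * x ^ k)
      (Metric.ball 0 r) (Metric.ball 0 (‖c 1‖ * r)) := by
  have h0 : ∑' k : ℕ, c k * (0 : K) ^ k = 0 := by
    rw [tsum_eq_single 0 fun k hk => by simp [zero_pow hk]]
    simp [hc0]
  refine bijOn_ball_of_lipschitzOnWith_sub_smul h0 fun s hs => ?_
  refine exists_lipschitzOnWith_tsum_mul_pow_sub_smul hc1 hdom hs fun x hx => hconv x ?_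
  exact (mem_closedBall_zero_iff.1 hx).trans_lt (hs.2.trans_le hrR)

/-- Let `K` be a complete algebraically closed non-Archimedean valued field and
`h(x) = ∑_{k ≥ 1} c_k xᵏ` a power series converging on the rational open disc `D_R(0)` with
`c₁ ≠ 0`.  If `0 < r ≤ R` and `‖c_k‖ rᵏ ≤ ‖c₁‖ r` for all `k ≥ 2`, then `h` maps the open
disc `D_r(0)` bijectively onto `D_{‖c₁‖ r}(0)`. -/
theorem power_series_bijOn_open_disc {K : Type*} [NontriviallyNormedField K]
    [IsUltrametricDist K] [CompleteSpace K] [IsAlgClosed K]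
    (c : ℕ → K) (hc0 : c 0 = 0) (hc1 : c 1 ≠ 0)
    (R : ℝ) (hRrat : ∃ z : K, z ≠ 0 ∧ ‖z‖ = R)
    (hconv : ∀ x : K, ‖x‖ < R → Summable fun k : ℕ => c k * x ^ k)
    (r : ℝ) (hr0 : 0 < r) (hrR : r ≤ R)
    (hdom : ∀ k : ℕ, 2 ≤ k → ‖c k‖ * r ^ k ≤ ‖c 1‖ * r) :
    Set.BijOn (fun x : K => ∑' k : ℕ, c k * x ^ k)
      (Metric.ball 0 r) (Metric.ball 0 (‖c 1‖ * r)) :=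
  power_series_bijOn_open_disc_general c hc0 hc1 R hconv r hrR hdom
end

section
/- Let K be an algebraically closed complete non-Archimedean valued field and f(x) = λx + Σ_{i≥2} a_i x^i a power series over K with |λ| = 1 that converges on some nonempty disc about 0. Then a = sup_{i≥2} |a_i|^{1/(i-1)} is finite, |a_i| ≤ a^{i-1} for all i ≥ 2, the radius of convergence of f is at least 1/a, and f maps the open disc D_{1/a}(0) bijectively onto itself. -/
/-!
On the disc `‖x‖ < 1 / A` every higher-order term `aᵢ xⁱ` of `f` is strictly smaller than the
linear term, and the same holds for differences: `‖aᵢ (xⁱ - yⁱ)‖ ≤ (A m)^{i-1} ‖x - y‖` when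
`‖x‖, ‖y‖ ≤ m`. By the ultrametric inequality `f` is therefore an isometry of the disc fixing `0`,
so it maps the disc injectively into itself. For surjectivity, `f x = w` is the fixed point
equation of `x ↦ λ⁻¹ (w - ∑ aᵢ xⁱ)`, a contraction of the closed ball of radius `‖w‖`.
The finiteness of `A` comes from the coefficient bound `‖aᵢ‖ ‖x₀‖ⁱ ≤ C` at any point `x₀ ≠ 0`
of convergence.
-/

open IsUltrametricDist

lemma mul_lt_one_of_lt_of_mul_le_one {A x R : ℝ} (hA : 0 ≤ A) (hx : x < R) (hAR : A * R ≤ 1) :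
    A * x < 1 := by
  rcases hA.eq_or_lt with rfl | hA
  · simp
  · exact (mul_lt_mul_of_pos_left hx hA).trans_le hAR

lemma rpow_one_div_sub_one_le_iff {t A : ℝ} (ht : 0 ≤ t) (hA : 0 ≤ A) {n : ℕ} (hn : 2 ≤ n) :
    t ^ (1 / ((n : ℝ) - 1)) ≤ A ↔ t ≤ A ^ (n - 1) := by
  have hcast : (n : ℝ) - 1 = ((n - 1 : ℕ) : ℝ) := by
    rw [Nat.cast_sub (by omega), Nat.cast_one]
  have hpos : (0 : ℝ) < (n : ℝ) - 1 := by
    rw [hcast]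
    exact_mod_cast Nat.sub_pos_of_lt hn
  rw [one_div, Real.rpow_inv_le_iff_of_pos ht hA hpos, hcast, Real.rpow_natCast]

lemma exists_isLUB_rpow_one_div_sub_one {c : ℕ → ℝ} (hc : ∀ i, 0 ≤ c i) {B : ℝ} (hB0 : 0 ≤ B)
    (hB : ∀ i, 2 ≤ i → c i ≤ B ^ (i - 1)) :
    ∃ A, IsLUB (Set.range fun i : {i : ℕ // 2 ≤ i} => c i ^ ((1 : ℝ) / ((i : ℕ) - 1 : ℝ))) A ∧
      0 ≤ A ∧ ∀ i, 2 ≤ i → c i ≤ A ^ (i - 1) := by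
  set S := Set.range fun i : {i : ℕ // 2 ≤ i} => c i ^ ((1 : ℝ) / ((i : ℕ) - 1 : ℝ))
  have hS : BddAbove S := by
    refine ⟨B, ?_⟩
    rintro _ ⟨⟨i, hi⟩, rfl⟩
    exact (rpow_one_div_sub_one_le_iff (hc i) hB0 hi).2 (hB i hi)
  have hlub : IsLUB S (sSup S) := isLUB_csSup ⟨_, ⟨2, le_rfl⟩, rfl⟩ hS
  have hA0 : 0 ≤ sSup S := (Real.rpow_nonneg (hc 2) _).trans (hlub.1 ⟨⟨2, le_rfl⟩, rfl⟩)
  exact ⟨sSup S, hlub, hA0, fun i hi =>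
    (rpow_one_div_sub_one_le_iff (hc i) hA0 hi).1 (hlub.1 ⟨⟨i, hi⟩, rfl⟩)⟩

section NormedField

variable {K : Type*} [NormedField K]

lemma exists_norm_le_pow_of_summable {a : ℕ → K} {x₀ : K} (hx₀ : x₀ ≠ 0)
    (hs : Summable fun i => a i * x₀ ^ i) :
    ∃ B, 0 ≤ B ∧ ∀ i, 2 ≤ i → ‖a i‖ ≤ B ^ (i - 1) := by
  obtain ⟨C, hC⟩ := hs.tendsto_atTop_zero.norm.bddAbove_range
  set c := max 1 C
  set q := max 1 ‖x₀‖⁻¹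
  have hx₀' : 0 < ‖x₀‖ := norm_pos_iff.2 hx₀
  have hc : 1 ≤ c := le_max_left _ _
  have hq : 1 ≤ q := le_max_left _ _
  refine ⟨c * q ^ 2, by positivity, fun i hi => ?_⟩
  have hCi : ‖a i‖ * ‖x₀‖ ^ i ≤ C := by simpa using hC (Set.mem_range_self i)
  calc ‖a i‖ ≤ C * ‖x₀‖⁻¹ ^ i := by
        rwa [inv_pow, ← div_eq_mul_inv, le_div_iff₀ (by positivity)]
    _ ≤ c * q ^ i := by gcongr <;> exact le_max_right _ _
    _ ≤ c ^ (i - 1) * q ^ (2 * (i - 1)) := by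
        gcongr
        · exact le_self_pow₀ hc (by omega)
        · omega
    _ = (c * q ^ 2) ^ (i - 1) := by rw [mul_pow, ← pow_mul]

lemma nonneg_of_forall_norm_le_pow {a : ℕ → K} {A : ℝ} (hA : ∀ i, 2 ≤ i → ‖a i‖ ≤ A ^ (i - 1)) :
    0 ≤ A :=
  (norm_nonneg _).trans (by simpa using hA 2 le_rfl)

lemma tsum_mul_zero_pow {a : ℕ → K} (ha0 : a 0 = 0) : ∑' i, a i * (0 : K) ^ i = 0 := by
  rw [tsum_congr fun i => show a i * (0 : K) ^ i = 0 by cases i <;> simp [ha0], tsum_zero]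

lemma norm_pow_sub_pow_le [IsUltrametricDist K] {x y : K} {m : ℝ} (hx : ‖x‖ ≤ m) (hy : ‖y‖ ≤ m)
    (i : ℕ) : ‖x ^ i - y ^ i‖ ≤ m ^ (i - 1) * ‖x - y‖ := by
  have hm : 0 ≤ m := (norm_nonneg x).trans hx
  rcases Nat.eq_zero_or_pos i with rfl | hi
  · simp only [pow_zero, sub_self, norm_zero]
    positivity
  rw [← geom_sum₂_mul, norm_mul]
  gcongr
  refine norm_sum_le_of_forall_le_of_nonneg (by positivity) fun j hj => ?_
  rw [Finset.mem_range] at hj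
  calc ‖x ^ j * y ^ (i - 1 - j)‖ ≤ m ^ j * m ^ (i - 1 - j) := by
        rw [norm_mul, norm_pow, norm_pow]
        gcongr
    _ = m ^ (i - 1) := by rw [← pow_add]; congr 1; omega

end NormedField

section PowerSeries

variable {K : Type*} [NormedField K] {a : ℕ → K} {A : ℝ}
  (hA : ∀ i, 2 ≤ i → ‖a i‖ ≤ A ^ (i - 1)) (ha0 : a 0 = 0) (ha1 : a 1 = 0)
include hA ha0 ha1

lemma norm_coeff_mul_pow_le (x : K) (i : ℕ) : ‖a i * x ^ i‖ ≤ ‖x‖ * (A * ‖x‖) ^ (i - 1) := by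
  match i with
  | 0 => simp [ha0]
  | 1 => simp [ha1]
  | n + 2 =>
    calc ‖a (n + 2) * x ^ (n + 2)‖ ≤ A ^ (n + 1) * ‖x‖ ^ (n + 2) := by
          rw [norm_mul, norm_pow]
          gcongr
          exact hA (n + 2) (by omega)
      _ = ‖x‖ * (A * ‖x‖) ^ (n + 1) := by ring

variable [CompleteSpace K]

lemma summable_coeff_mul_pow {x : K} (hx : A * ‖x‖ < 1) : Summable fun i => a i * x ^ i := by
  have hA0 : 0 ≤ A := nonneg_of_forall_norm_le_pow hA
  refine .of_norm_bounded ?_ (norm_coeff_mul_pow_le hA ha0 ha1 x)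
  rw [← summable_nat_add_iff 1]
  simpa using (summable_geometric_of_lt_one (by positivity) hx).mul_left ‖x‖

variable [IsUltrametricDist K]

lemma norm_tsum_sub_tsum_le {m : ℝ} (hm : A * m < 1) {x y : K} (hx : ‖x‖ ≤ m) (hy : ‖y‖ ≤ m) :
    ‖∑' i, a i * x ^ i - ∑' i, a i * y ^ i‖ ≤ A * m * ‖x - y‖ := by
  have hA0 : 0 ≤ A := nonneg_of_forall_norm_le_pow hA
  have hm0 : 0 ≤ m := (norm_nonneg x).trans hx
  have hsx := summable_coeff_mul_pow hA ha0 ha1 ((mul_le_mul_of_nonneg_left hx hA0).trans_lt hm)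
  have hsy := summable_coeff_mul_pow hA ha0 ha1 ((mul_le_mul_of_nonneg_left hy hA0).trans_lt hm)
  rw [← hsx.tsum_sub hsy]
  refine norm_tsum_le_of_forall_le_of_nonneg (by positivity) fun i => ?_
  rw [← mul_sub]
  match i with
  | 0 => simp only [pow_zero, sub_self, mul_zero, norm_zero]; positivity
  | 1 => simp only [ha1, zero_mul, norm_zero]; positivity
  | n + 2 =>
    calc ‖a (n + 2) * (x ^ (n + 2) - y ^ (n + 2))‖ ≤ A ^ (n + 1) * (m ^ (n + 1) * ‖x - y‖) := by
          rw [norm_mul]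
          gcongr
          · exact hA (n + 2) (by omega)
          · exact norm_pow_sub_pow_le hx hy (n + 2)
      _ = (A * m) ^ (n + 1) * ‖x - y‖ := by ring
      _ ≤ A * m * ‖x - y‖ := by
          gcongr
          exact pow_le_of_le_one (by positivity) hm.le (by omega)

lemma norm_sub_eq_of_norm_lt {lam : K} (hlam : ‖lam‖ = 1) {R : ℝ} (hAR : A * R ≤ 1) {x y : K}
    (hx : ‖x‖ < R) (hy : ‖y‖ < R) :
    ‖(lam * x + ∑' i, a i * x ^ i) - (lam * y + ∑' i, a i * y ^ i)‖ = ‖x - y‖ := by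
  rcases eq_or_ne x y with rfl | hxy
  · simp
  have hm : A * max ‖x‖ ‖y‖ < 1 :=
    mul_lt_one_of_lt_of_mul_le_one (nonneg_of_forall_norm_le_pow hA) (max_lt hx hy) hAR
  have hlt : ‖∑' i, a i * x ^ i - ∑' i, a i * y ^ i‖ < ‖lam * (x - y)‖ := by
    rw [norm_mul, hlam, one_mul]
    calc _ ≤ A * max ‖x‖ ‖y‖ * ‖x - y‖ :=
          norm_tsum_sub_tsum_le hA ha0 ha1 hm (le_max_left _ _) (le_max_right _ _)
      _ < ‖x - y‖ := mul_lt_of_lt_one_left (norm_pos_iff.2 (sub_ne_zero.2 hxy)) hm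
  rw [add_sub_add_comm, ← mul_sub, norm_add_eq_max_of_norm_ne_norm hlt.ne', max_eq_left hlt.le,
    norm_mul, hlam, one_mul]

lemma surjOn_ball {lam : K} (hlam : ‖lam‖ = 1) {R : ℝ} (hAR : A * R ≤ 1) :
    Set.SurjOn (fun x => lam * x + ∑' i, a i * x ^ i) (Metric.ball 0 R) (Metric.ball 0 R) := by
  intro w hw
  rw [mem_ball_zero_iff] at hw
  have hA0 : 0 ≤ A := nonneg_of_forall_norm_le_pow hA
  have hc : A * ‖w‖ < 1 := mul_lt_one_of_lt_of_mul_le_one hA0 hw hAR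
  set g : K → K := fun x => lam⁻¹ * (w - ∑' i, a i * x ^ i)
  have hg : ∀ x y, ‖x‖ ≤ ‖w‖ → ‖y‖ ≤ ‖w‖ → ‖g x - g y‖ ≤ A * ‖w‖ * ‖x - y‖ := by
    intro x y hx hy
    rw [← mul_sub, sub_sub_sub_cancel_left, norm_mul, norm_inv, hlam, inv_one, one_mul,
      norm_sub_rev x]
    exact norm_tsum_sub_tsum_le hA ha0 ha1 hc hy hx
  have hmaps : Set.MapsTo g (Metric.closedBall 0 ‖w‖) (Metric.closedBall 0 ‖w‖) := by
    intro x hx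
    rw [mem_closedBall_zero_iff] at hx ⊢
    have hg0 : ‖g 0‖ = ‖w‖ := by
      simp only [g, tsum_mul_zero_pow ha0, sub_zero, norm_mul, norm_inv, hlam, inv_one, one_mul]
    calc ‖g x‖ = ‖g 0 + (g x - g 0)‖ := by rw [add_sub_cancel]
      _ ≤ max ‖g 0‖ ‖g x - g 0‖ := norm_add_le_max _ _
      _ ≤ ‖w‖ := max_le hg0.le <| by
          calc ‖g x - g 0‖ ≤ A * ‖w‖ * ‖x - 0‖ := hg x 0 hx (by simp)
            _ ≤ 1 * ‖w‖ := by rw [sub_zero]; gcongr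
            _ = ‖w‖ := one_mul _
  have hcon : ContractingWith ⟨A * ‖w‖, by positivity⟩ (hmaps.restrict g _ _) := by
    refine ⟨hc, LipschitzWith.of_dist_le_mul fun ⟨x, hx⟩ ⟨y, hy⟩ => ?_⟩
    rw [mem_closedBall_zero_iff] at hx hy
    rw [Subtype.dist_eq, Subtype.dist_eq, dist_eq_norm, dist_eq_norm]
    exact hg x y hx hy
  obtain ⟨y, hy, hfix, -⟩ := hcon.exists_fixedPoint' Metric.isClosed_closedBall.isComplete hmaps
    (Metric.mem_closedBall_self (norm_nonneg w)) (edist_ne_top _ _)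
  refine ⟨y, mem_ball_zero_iff.2 ((mem_closedBall_zero_iff.1 hy).trans_lt hw), ?_⟩
  have hlam0 : lam ≠ 0 := norm_ne_zero_iff.1 (by rw [hlam]; exact one_ne_zero)
  have hfix : lam⁻¹ * (w - ∑' i, a i * y ^ i) = y := hfix
  show lam * y + _ = w
  rw [(eq_inv_mul_iff_mul_eq₀ hlam0).1 hfix.symm, sub_add_cancel]

theorem bijOn_ball {lam : K} (hlam : ‖lam‖ = 1) {R : ℝ} (hAR : A * R ≤ 1) :
    Set.BijOn (fun x => lam * x + ∑' i, a i * x ^ i) (Metric.ball 0 R) (Metric.ball 0 R) := by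
  refine ⟨fun x hx => ?_, fun x hx y hy hxy => ?_, surjOn_ball hA ha0 ha1 hlam hAR⟩
  · rw [mem_ball_zero_iff] at hx ⊢
    have h0 : ‖(0 : K)‖ < R := by simpa using (norm_nonneg x).trans_lt hx
    have h := norm_sub_eq_of_norm_lt hA ha0 ha1 hlam hAR hx h0
    rw [tsum_mul_zero_pow ha0, mul_zero, add_zero, sub_zero, sub_zero] at h
    exact h ▸ hx
  · rw [mem_ball_zero_iff] at hx hy
    have h := norm_sub_eq_of_norm_lt hA ha0 ha1 hlam hAR hx hy
    dsimp only at hxy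
    rwa [hxy, sub_self, norm_zero, eq_comm, norm_eq_zero, sub_eq_zero] at h

end PowerSeries

theorem f_bijective_on_disc_general {K : Type*} [NontriviallyNormedField K]
    [IsUltrametricDist K] [CompleteSpace K]
    (lam : K) (hlam : ‖lam‖ = 1)
    (a : ℕ → K) (ha0 : a 0 = 0) (ha1 : a 1 = 0)
    (hconv : ∃ r : ℝ, 0 < r ∧ ∀ x : K, ‖x‖ < r → Summable fun i : ℕ => a i * x ^ i) :
    ∃ A : ℝ,
      IsLUB (Set.range fun i : {i : ℕ // 2 ≤ i} =>
        ‖a (i : ℕ)‖ ^ ((1 : ℝ) / ((i : ℕ) - 1 : ℝ))) A ∧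
      (∀ i : ℕ, 2 ≤ i → ‖a i‖ ≤ A ^ (i - 1)) ∧
      (∀ x : K, ‖x‖ < 1 / A → Summable fun i : ℕ => a i * x ^ i) ∧
      Set.BijOn (fun x : K => lam * x + ∑' i : ℕ, a i * x ^ i)
        (Metric.ball 0 (1 / A)) (Metric.ball 0 (1 / A)) := by
  obtain ⟨r, hr, hs⟩ := hconv
  obtain ⟨x₀, hx₀, hx₀r⟩ := NormedField.exists_norm_lt K hr
  obtain ⟨B, hB0, hB⟩ := exists_norm_le_pow_of_summable (norm_pos_iff.1 hx₀) (hs x₀ hx₀r)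
  obtain ⟨A, hlub, hA0, hA⟩ := exists_isLUB_rpow_one_div_sub_one (fun i => norm_nonneg (a i)) hB0 hB
  have hAR : A * (1 / A) ≤ 1 := by rw [one_div]; exact mul_inv_le_one
  exact ⟨A, hlub, hA, fun x hx =>
    summable_coeff_mul_pow hA ha0 ha1 (mul_lt_one_of_lt_of_mul_le_one hA0 hx hAR),
    bijOn_ball hA ha0 ha1 hlam hAR⟩

/-- Let `K` be an algebraically closed complete non-Archimedean valued field and
`f(x) = λx + ∑_{i ≥ 2} aᵢ xⁱ` with `‖λ‖ = 1`, converging on some nonempty disc about `0`.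
Then `a = sup_{i ≥ 2} ‖aᵢ‖^{1/(i-1)}` is finite, `‖aᵢ‖ ≤ a^{i-1}` for all `i ≥ 2`, the radius
of convergence of `f` is at least `1/a`, and `f` maps `D_{1/a}(0)` bijectively onto itself. -/
theorem f_bijective_on_disc {K : Type*} [NontriviallyNormedField K]
    [IsUltrametricDist K] [CompleteSpace K] [IsAlgClosed K]
    (lam : K) (hlam : ‖lam‖ = 1)
    (a : ℕ → K) (ha0 : a 0 = 0) (ha1 : a 1 = 0)
    (hconv : ∃ r : ℝ, 0 < r ∧ ∀ x : K, ‖x‖ < r → Summable fun i : ℕ => a i * x ^ i) :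
    ∃ A : ℝ,
      IsLUB (Set.range fun i : {i : ℕ // 2 ≤ i} =>
        ‖a (i : ℕ)‖ ^ ((1 : ℝ) / ((i : ℕ) - 1 : ℝ))) A ∧
      (∀ i : ℕ, 2 ≤ i → ‖a i‖ ≤ A ^ (i - 1)) ∧
      (∀ x : K, ‖x‖ < 1 / A → Summable fun i : ℕ => a i * x ^ i) ∧
      Set.BijOn (fun x : K => lam * x + ∑' i : ℕ, a i * x ^ i)
        (Metric.ball 0 (1 / A)) (Metric.ball 0 (1 / A)) :=
  f_bijective_on_disc_general lam hlam a ha0 ha1 hconv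
end

section
/- Let K be a complete algebraically closed non-Archimedean valued field, f(x) = λx + Σ_{i≥2} a_i x^i with |λ| = 1, a = sup_{i≥2}|a_i|^{1/(i-1)}, and suppose f is linearizable with conjugacy g. Let τ < 1/a be such that g maps D_τ(0) bijectively onto itself (Weierstrass degree 1) and g maps the closed disc of radius τ onto itself d-to-1 with d > 1. Then f has a periodic point x̂ on the sphere S_τ(0) = {x : |x| = τ} of period κ ≤ d, and x̂ is indifferent: |(f^κ)'(x̂)| = 1. -/
/-!
Write `g x = x G(x)` with `G = ∑ b_{k+1} xᵏ`. The hypotheses on `b` say that `G` has Weierstrass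
degree `0` on the open disc and `D = d - 1` on the closed disc of radius `τ`, and so do its
truncations. For a polynomial `Q` with these data, the ultrametric inequality shows that `Q` has no
root in the open disc, at most `D` roots in the closed disc, and at least one if `deg Q = D ≥ 1`;
on the disc, `‖Q x‖ τ^m = ∏ ‖x - r‖` over the `m` roots on the sphere, so `Q` is small only near
them. Passing to the limit by successive approximation in the complete field, `G` has a zero on
the sphere `‖x‖ = τ` and at most `D` of them.

Since `‖a_i‖ ≤ A^{i-1}` and `Aτ < 1`, the map `f` is an isometry of the ball of radius `1/A`
fixing `0`. With `g ∘ f = λ g` this makes the finite zero set of `g` on the sphere `f`-invariant,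
so by pigeonhole it contains a periodic point of period at most `D < d`; and every iterate of an
isometry has a derivative of norm one.
-/

open Filter Topology Polynomial

/-- `D` is the Weierstrass degree of `∑ c k xᵏ` on the closed disc of radius `τ`: the largest
index at which `‖c k‖ τᵏ` attains its maximum `M`. -/
structure HasWeierstrassDegree {K : Type*} [Norm K] (c : ℕ → K) (τ M : ℝ) (D : ℕ) : Prop where
  le : ∀ k, ‖c k‖ * τ ^ k ≤ M
  eq : ‖c D‖ * τ ^ D = M
  lt : ∀ k, D < k → ‖c k‖ * τ ^ k < M

namespace HasWeierstrassDegree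

section SeminormedAddGroup

variable {K : Type*} [SeminormedAddGroup K] {c : ℕ → K} {τ M : ℝ} {D : ℕ}

theorem pos (h : HasWeierstrassDegree c τ M D) (hτ : 0 ≤ τ) : 0 < M :=
  (by positivity : 0 ≤ ‖c (D + 1)‖ * τ ^ (D + 1)).trans_lt (h.lt _ D.lt_succ_self)

theorem ne_zero (h : HasWeierstrassDegree c τ M D) (hτ : 0 ≤ τ) : c D ≠ 0 :=
  fun hD => (h.pos hτ).ne (by simpa [hD] using h.eq)

theorem shift (h : HasWeierstrassDegree c τ M (D + 1)) (hτ : 0 < τ) :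
    HasWeierstrassDegree (fun k => c (k + 1)) τ (M / τ) D where
  le k := by rw [le_div_iff₀ hτ, mul_assoc, ← pow_succ]; exact h.le (k + 1)
  eq := by rw [eq_div_iff hτ.ne', mul_assoc, ← pow_succ]; exact h.eq
  lt k hk := by rw [lt_div_iff₀ hτ, mul_assoc, ← pow_succ]; exact h.lt (k + 1) (by omega)

end SeminormedAddGroup

theorem trunc {R : Type*} [SeminormedRing R] {c : ℕ → R} {τ M : ℝ} {D N : ℕ}
    (h : HasWeierstrassDegree c τ M D) (hτ : 0 ≤ τ) (hN : D < N) :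
    HasWeierstrassDegree (PowerSeries.trunc N (PowerSeries.mk c)).coeff τ M D := by
  have hcoeff (k : ℕ) :
      (PowerSeries.trunc N (PowerSeries.mk c)).coeff k = if k < N then c k else 0 := by
    rw [PowerSeries.coeff_trunc, PowerSeries.coeff_mk]
  refine ⟨fun k => ?_, by rw [hcoeff, if_pos hN, h.eq], fun k hk => ?_⟩ <;> rw [hcoeff] <;>
    split_ifs
  · exact h.le k
  · simpa using (h.pos hτ).le
  · exact h.lt k hk
  · simpa using h.pos hτ

end HasWeierstrassDegree

theorem IsUltrametricDist.norm_sum_eq_of_lt {M ι : Type*} [SeminormedAddCommGroup M]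
    [IsUltrametricDist M] {s : Finset ι} {f : ι → M} {j : ι}
    (hj : j ∈ s) (h : ∀ i ∈ s, i ≠ j → ‖f i‖ < ‖f j‖) : ‖∑ i ∈ s, f i‖ = ‖f j‖ := by
  classical
  rw [← Finset.add_sum_erase s f hj]
  rcases (s.erase j).eq_empty_or_nonempty with he | hne
  · rw [he, Finset.sum_empty, add_zero]
  obtain ⟨i, hi, hle⟩ := exists_norm_finsetSum_le_of_nonempty hne f
  have hrest := hle.trans_lt (h i (Finset.mem_of_mem_erase hi) (Finset.ne_of_mem_erase hi))
  rw [norm_add_eq_max_of_norm_ne_norm hrest.ne', max_eq_left hrest.le]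

section Ultrametric

variable {K : Type*} [NontriviallyNormedField K] [IsUltrametricDist K]

theorem norm_pow_sub_pow_le_s18 {u v : K} {r : ℝ} (hu : ‖u‖ ≤ r) (hv : ‖v‖ ≤ r) (n : ℕ) :
    ‖u ^ n - v ^ n‖ ≤ ‖u - v‖ * r ^ (n - 1) := by
  have hr : 0 ≤ r := (norm_nonneg u).trans hu
  rw [← geom_sum₂_mul, norm_mul, mul_comm]
  gcongr
  refine IsUltrametricDist.norm_sum_le_of_forall_le_of_nonneg (by positivity) fun i hi => ?_
  rw [Finset.mem_range] at hi
  calc ‖u ^ i * v ^ (n - 1 - i)‖ ≤ r ^ i * r ^ (n - 1 - i) := by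
        rw [norm_mul, norm_pow, norm_pow]; gcongr
    _ = r ^ (n - 1) := by rw [← pow_add]; congr 1; omega

namespace Polynomial

theorem norm_eval_eq_of_lt {Q : K[X]} {x : K} {j : ℕ}
    (h : ∀ k, k ≠ j → ‖Q.coeff k * x ^ k‖ < ‖Q.coeff j * x ^ j‖) :
    ‖Q.eval x‖ = ‖Q.coeff j * x ^ j‖ := by
  rw [eval_eq_sum_range' (n := max Q.natDegree j + 1) (by omega)]
  exact IsUltrametricDist.norm_sum_eq_of_lt (by simp) fun k _ hk => h k hk

theorem le_norm_of_isRoot {Q : K[X]} {τ : ℝ} (hτ : 0 < τ) (h0 : Q.coeff 0 ≠ 0)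
    (hle : ∀ k, ‖Q.coeff k‖ * τ ^ k ≤ ‖Q.coeff 0‖) {r : K} (hr : Q.IsRoot r) : τ ≤ ‖r‖ := by
  by_contra! hrτ
  have hρ : ‖r‖ / τ < 1 := (div_lt_one hτ).mpr hrτ
  have hdom : ∀ k, k ≠ 0 → ‖Q.coeff k * r ^ k‖ < ‖Q.coeff 0 * r ^ 0‖ := fun k hk => by
    calc ‖Q.coeff k * r ^ k‖ = ‖Q.coeff k‖ * τ ^ k * (‖r‖ / τ) ^ k := by
          rw [norm_mul, norm_pow, div_pow, mul_assoc, mul_div_cancel₀ _ (by positivity)]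
      _ ≤ ‖Q.coeff 0‖ * (‖r‖ / τ) ^ k := by gcongr; exact hle k
      _ < ‖Q.coeff 0 * r ^ 0‖ := by
          rw [pow_zero, mul_one]
          exact mul_lt_of_lt_one_right (norm_pos_iff.mpr h0) (pow_lt_one₀ (by positivity) hρ hk)
  have := norm_eval_eq_of_lt hdom
  rw [hr.eq_zero, norm_zero, pow_zero, mul_one] at this
  exact h0 (norm_eq_zero.mp this.symm)

theorem exists_lt_norm_coeff_mul_pow_le {q : K[X]} {z : K} {τ : ℝ} (hτ : 0 ≤ τ) (hz : ‖z‖ ≤ τ)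
    (k : ℕ) : ∃ j, k < j ∧ ‖q.coeff k‖ * τ ^ (k + 1) ≤ ‖(q * (X - C z)).coeff j‖ * τ ^ j := by
  induction h : q.natDegree + 1 - k generalizing k with
  | zero =>
    refine ⟨k + 1, k.lt_succ_self, ?_⟩
    rw [coeff_eq_zero_of_natDegree_lt (by omega)]
    simp only [norm_zero, zero_mul]
    positivity
  | succ m ih =>
    obtain ⟨j, hkj, hj⟩ := ih (k + 1) (by omega)
    set Q := q * (X - C z)
    have key : ‖q.coeff k‖ * τ ^ (k + 1) ≤
        max (‖Q.coeff (k + 1)‖ * τ ^ (k + 1)) (‖Q.coeff j‖ * τ ^ j) := by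
      -- `q k = Q (k + 1) + q (k + 1) * z`
      rw [← sub_add_cancel (q.coeff k) (q.coeff (k + 1) * z), ← coeff_mul_X_sub_C]
      refine (mul_le_mul_of_nonneg_right (IsUltrametricDist.norm_add_le_max _ _)
        (by positivity)).trans ?_
      rw [max_mul_of_nonneg _ _ (by positivity)]
      refine max_le_max le_rfl (le_trans ?_ hj)
      rw [norm_mul, pow_succ _ (k + 1), mul_right_comm, ← mul_assoc]
      gcongr
    rcases le_max_iff.mp key with h1 | h2
    · exact ⟨k + 1, k.lt_succ_self, h1⟩
    · exact ⟨j, by omega, h2⟩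

theorem _root_.HasWeierstrassDegree.of_mul_X_sub_C {τ M : ℝ} {D : ℕ} {q : K[X]} {z : K}
    (hτ : 0 < τ) (hz : ‖z‖ ≤ τ)
    (h : HasWeierstrassDegree (q * (X - C z)).coeff τ M (D + 1)) :
    HasWeierstrassDegree q.coeff τ (M / τ) D := by
  have hdom (k : ℕ) :
      ∃ j, k < j ∧ ‖q.coeff k‖ * τ ^ k ≤ ‖(q * (X - C z)).coeff j‖ * τ ^ j / τ := by
    obtain ⟨j, hkj, hj⟩ := exists_lt_norm_coeff_mul_pow_le hτ.le hz k
    exact ⟨j, hkj, by rwa [le_div_iff₀ hτ, mul_assoc, ← pow_succ]⟩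
  refine ⟨fun k => ?_, ?_, fun k hk => ?_⟩
  · obtain ⟨j, -, hj⟩ := hdom k
    exact hj.trans (by gcongr; exact h.le j)
  · obtain ⟨j, hj1, hj⟩ := hdom (D + 1)
    set Q := q * (X - C z)
    have hsmall : ‖q.coeff (D + 1) * z‖ * τ ^ (D + 1) < ‖Q.coeff (D + 1)‖ * τ ^ (D + 1) := by
      rw [h.eq, norm_mul]
      calc ‖q.coeff (D + 1)‖ * ‖z‖ * τ ^ (D + 1) ≤ τ * (‖q.coeff (D + 1)‖ * τ ^ (D + 1)) := by
            rw [mul_comm τ, mul_right_comm]; gcongr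
        _ < τ * (M / τ) := by
            gcongr
            exact hj.trans_lt (by gcongr; exact h.lt j hj1)
        _ = M := mul_div_cancel₀ M hτ.ne'
    have hnorm := lt_of_mul_lt_mul_right hsmall (by positivity)
    rw [← sub_add_cancel (q.coeff D) (q.coeff (D + 1) * z), ← coeff_mul_X_sub_C,
      IsUltrametricDist.norm_add_eq_max_of_norm_ne_norm hnorm.ne',
      max_eq_left hnorm.le, eq_div_iff hτ.ne', mul_assoc, ← pow_succ, h.eq]
  · obtain ⟨j, hkj, hj⟩ := hdom k
    exact hj.trans_lt (by gcongr; exact h.lt j (by omega))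

theorem card_roots_filter_le {Q : K[X]} {τ M : ℝ} {D : ℕ} (hτ : 0 < τ)
    (h : HasWeierstrassDegree Q.coeff τ M D) :
    Multiset.card (Q.roots.filter (‖·‖ ≤ τ)) ≤ D := by
  induction D generalizing Q M with
  | zero =>
    suffices Q.roots.filter (‖·‖ ≤ τ) = 0 by simp [this]
    refine Multiset.filter_eq_nil.mpr fun r hr hrτ => ?_
    have hdom (k : ℕ) (hk : k ≠ 0) : ‖Q.coeff k * r ^ k‖ < ‖Q.coeff 0 * r ^ 0‖ := calc
      ‖Q.coeff k * r ^ k‖ ≤ ‖Q.coeff k‖ * τ ^ k := by rw [norm_mul, norm_pow]; gcongr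
      _ < M := h.lt k (Nat.pos_of_ne_zero hk)
      _ = ‖Q.coeff 0 * r ^ 0‖ := by simpa using h.eq.symm
    have := norm_eval_eq_of_lt hdom
    rw [(mem_roots'.mp hr).2.eq_zero, norm_zero, pow_zero, mul_one, eq_comm, norm_eq_zero] at this
    exact h.ne_zero hτ.le this
  | succ D ih =>
    by_cases hroot : ∃ z ∈ Q.roots, ‖z‖ ≤ τ
    · obtain ⟨z, hz, hzτ⟩ := hroot
      obtain ⟨q, rfl⟩ := dvd_iff_isRoot.mpr (mem_roots'.mp hz).2
      rw [mul_comm] at h hz ⊢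
      rw [roots_mul (mem_roots'.mp hz).1, roots_X_sub_C, Multiset.filter_add, Multiset.card_add]
      have := ih (h.of_mul_X_sub_C hτ hzτ)
      have : Multiset.card (Multiset.filter (‖·‖ ≤ τ) {z}) ≤ 1 := by
        rw [Multiset.filter_singleton]; split <;> simp
      omega
    · simp [Multiset.filter_eq_nil.mpr fun r hr hrτ => hroot ⟨r, hr, hrτ⟩]

section AlgClosed

variable [IsAlgClosed K]

theorem norm_eval_mul_prod_norm_roots (Q : K[X]) {τ : ℝ} {x : K} (hx : ‖x‖ ≤ τ) :
    ‖Q.eval x‖ * ((Q.roots.filter (‖·‖ ≤ τ)).map (‖·‖)).prod =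
      ‖Q.eval 0‖ * ((Q.roots.filter (‖·‖ ≤ τ)).map fun r => ‖x - r‖).prod := by
  set R := Q.roots.filter (‖·‖ ≤ τ)
  set R' := Q.roots.filter fun r => ¬‖r‖ ≤ τ
  have hnorm (y : K) : ‖Q.eval y‖ =
      ‖Q.leadingCoeff‖ * (R.map fun r => ‖y - r‖).prod * (R'.map fun r => ‖y - r‖).prod := by
    conv_lhs => rw [← C_leadingCoeff_mul_prod_multiset_X_sub_C
      (IsAlgClosed.card_roots_eq_natDegree (p := Q))]
    rw [mul_assoc, ← Multiset.prod_add, ← Multiset.map_add, Multiset.filter_add_not, eval_mul,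
      eval_C, eval_multiset_prod, norm_mul]
    congr 1
    exact (map_multiset_prod (normHom (α := K)) _).trans (by simp [Multiset.map_map])
  have hfar : (R'.map fun r => ‖x - r‖) = R'.map fun r => ‖0 - r‖ := by
    refine Multiset.map_congr rfl fun r hr => ?_
    have hxr : ‖x‖ < ‖-r‖ := norm_neg r ▸ hx.trans_lt (not_le.mp (Multiset.mem_filter.mp hr).2)
    rw [sub_eq_add_neg, zero_sub, IsUltrametricDist.norm_add_eq_max_of_norm_ne_norm hxr.ne,
      max_eq_right hxr.le]
  rw [hnorm x, hnorm 0, hfar]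
  simp only [zero_sub, norm_neg]
  ring

theorem exists_isRoot_norm_sub_le {Q : K[X]} {τ ρ : ℝ} {D : ℕ} (hτ : 0 < τ)
    (h0 : ‖Q.coeff 0‖ = 1) (h : HasWeierstrassDegree Q.coeff τ 1 D) {x : K} (hx : ‖x‖ ≤ τ)
    (hρ0 : 0 ≤ ρ) (hρ1 : ρ ≤ 1) (hQx : ‖Q.eval x‖ < 1) (hQρ : ‖Q.eval x‖ ≤ ρ ^ D) :
    ∃ r, Q.IsRoot r ∧ ‖r‖ = τ ∧ ‖x - r‖ ≤ τ * ρ := by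
  set R := Q.roots.filter (‖·‖ ≤ τ)
  have hR (r : K) (hr : r ∈ R) : Q.IsRoot r ∧ ‖r‖ = τ := by
    obtain ⟨hr, hrτ⟩ := Multiset.mem_filter.mp hr
    have hroot := (mem_roots'.mp hr).2
    refine ⟨hroot, hrτ.antisymm (le_norm_of_isRoot hτ ?_ (h0 ▸ h.le) hroot)⟩
    exact norm_ne_zero_iff.mp (h0 ▸ one_ne_zero)
  have hprod : ‖Q.eval x‖ * (R.map (‖·‖)).prod = ‖Q.eval 0‖ * (R.map fun r => ‖x - r‖).prod :=
    norm_eval_mul_prod_norm_roots Q hx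
  rw [Multiset.map_congr rfl fun r hr => (hR r hr).2, Multiset.map_const', Multiset.prod_replicate,
    ← coeff_zero_eq_eval_zero, h0, one_mul] at hprod
  have hne : R ≠ 0 := fun hR0 => hQx.ne (by simpa [hR0] using hprod)
  obtain ⟨r, hr, hmin⟩ := Multiset.exists_min_image (fun r => ‖x - r‖) hne
  refine ⟨r, (hR r hr).1, (hR r hr).2, ?_⟩
  have hm : Multiset.card R ≤ D := card_roots_filter_le hτ h
  refine le_of_pow_le_pow_left₀ (Multiset.card_pos.mpr hne).ne' (by positivity) ?_
  calc ‖x - r‖ ^ Multiset.card R = (R.map fun _ => ‖x - r‖).prod := by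
        rw [Multiset.map_const', Multiset.prod_replicate]
    _ ≤ (R.map fun r => ‖x - r‖).prod :=
        Multiset.prod_map_le_prod_map₀ _ _ (fun _ _ => norm_nonneg _) hmin
    _ = ‖Q.eval x‖ * τ ^ Multiset.card R := hprod.symm
    _ ≤ ρ ^ Multiset.card R * τ ^ Multiset.card R := by
        gcongr
        exact hQρ.trans (pow_le_pow_of_le_one hρ0 hρ1 hm)
    _ = (τ * ρ) ^ Multiset.card R := by rw [mul_pow, mul_comm]

theorem exists_isRoot_norm_eq {Q : K[X]} {τ : ℝ} {D : ℕ} (hτ : 0 < τ) (h0 : ‖Q.coeff 0‖ = 1)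
    (h : HasWeierstrassDegree Q.coeff τ 1 D) (hdeg : Q.natDegree = D) (hD : 0 < D) :
    ∃ r, Q.IsRoot r ∧ ‖r‖ = τ := by
  obtain ⟨r, hr⟩ := IsAlgClosed.exists_root Q fun hQ => by
    have := natDegree_eq_of_degree_eq_some (n := 0) hQ; omega
  have hτr : τ ≤ ‖r‖ :=
    le_norm_of_isRoot hτ (norm_ne_zero_iff.mp (h0 ▸ one_ne_zero)) (h0 ▸ h.le) hr
  refine ⟨r, hr, le_antisymm ?_ hτr⟩
  by_contra! hrτ
  have hρ : 1 < ‖r‖ / τ := (one_lt_div hτ).mpr hrτ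
  have hdom (k : ℕ) (hk : k ≠ D) : ‖Q.coeff k * r ^ k‖ < ‖Q.coeff D * r ^ D‖ := by
    rcases lt_or_gt_of_ne hk with hkD | hDk
    · calc ‖Q.coeff k * r ^ k‖ = ‖Q.coeff k‖ * τ ^ k * (‖r‖ / τ) ^ k := by
            rw [norm_mul, norm_pow, div_pow, mul_assoc, mul_div_cancel₀ _ (by positivity)]
        _ ≤ (‖r‖ / τ) ^ k := mul_le_of_le_one_left (by positivity) (h.le k)
        _ < (‖r‖ / τ) ^ D := pow_lt_pow_right₀ hρ hkD
        _ = ‖Q.coeff D‖ * τ ^ D * (‖r‖ / τ) ^ D := by rw [h.eq, one_mul]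
        _ = ‖Q.coeff D * r ^ D‖ := by
            rw [norm_mul, norm_pow, div_pow, mul_assoc, mul_div_cancel₀ _ (by positivity)]
    · rw [coeff_eq_zero_of_natDegree_lt (hdeg ▸ hDk), zero_mul, norm_zero, norm_mul, norm_pow]
      exact mul_pos (norm_pos_iff.mpr (h.ne_zero hτ.le)) (pow_pos (hτ.trans hrτ) D)
  have := norm_eval_eq_of_lt hdom
  rw [hr.eq_zero, norm_zero, eq_comm, norm_eq_zero] at this
  exact mul_ne_zero (h.ne_zero hτ.le) (pow_ne_zero D (norm_pos_iff.mp (hτ.trans hrτ))) this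

end AlgClosed

end Polynomial

end Ultrametric

theorem exists_lt_forall_le_of_tendsto {u : ℕ → ℝ} {M : ℝ} {D : ℕ} (hu : Tendsto u atTop (𝓝 0))
    (hM : 0 < M) (hlt : ∀ k, D < k → u k < M) : ∃ η < M, ∀ k, D < k → u k ≤ η := by
  obtain ⟨N, hN⟩ := eventually_atTop.mp (hu.eventually (ge_mem_nhds (half_pos hM)))
  obtain ⟨k₀, hk₀, hmax⟩ := (Finset.Ioc D (max N (D + 1))).exists_max_image u
    ⟨D + 1, Finset.mem_Ioc.mpr ⟨D.lt_succ_self, le_max_right _ _⟩⟩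
  refine ⟨max (M / 2) (u k₀), max_lt (half_lt_self hM) (hlt k₀ (Finset.mem_Ioc.mp hk₀).1),
    fun k hk => ?_⟩
  by_cases hkN : k ≤ max N (D + 1)
  · exact (hmax k (Finset.mem_Ioc.mpr ⟨hk, hkN⟩)).trans (le_max_right _ _)
  · exact (hN k (by omega)).trans (le_max_left _ _)

theorem exists_pos_forall_lt_dist {X : Type*} [MetricSpace X] (T : Finset X) :
    ∃ δ > 0, ∀ t ∈ T, ∀ t' ∈ T, t ≠ t' → δ < dist t t' := by
  have hsep : ∀ᶠ δ in 𝓝[>] (0 : ℝ), ∀ p ∈ T.offDiag, δ < dist p.1 p.2 :=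
    nhdsWithin_le_nhds <| (eventually_all_finset T.offDiag).mpr fun p hp =>
      eventually_lt_nhds (dist_pos.mpr (Finset.mem_offDiag.mp hp).2.2)
  obtain ⟨δ, hδ, hδ0⟩ := (hsep.and self_mem_nhdsWithin).exists
  exact ⟨δ, hδ0, fun t ht t' ht' hne => hδ (t, t') (Finset.mem_offDiag.mpr ⟨ht, ht', hne⟩)⟩

theorem exists_mem_le_zero_of_approx {X : Type*} [PseudoMetricSpace X] [CompleteSpace X]
    {S : Set X} (hS : IsClosed S) {φ : X → ℝ} (hφ : ContinuousOn φ S) {ε δ : ℕ → ℝ}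
    (hε : Tendsto ε atTop (𝓝 0)) (hδ : Summable δ) {x₀ : X} (hx₀ : x₀ ∈ S) (h₀ : φ x₀ < ε 0)
    (hstep : ∀ n, ∀ x ∈ S, φ x < ε n → ∃ y ∈ S, φ y < ε (n + 1) ∧ dist x y ≤ δ n) :
    ∃ x ∈ S, φ x ≤ 0 := by
  choose! next hnextS hnextφ hnextδ using hstep
  let u : ℕ → X := fun n => Nat.rec x₀ next n
  have hu (n : ℕ) : u n ∈ S ∧ φ (u n) < ε n := by
    induction n with
    | zero => exact ⟨hx₀, h₀⟩
    | succ n ih => exact ⟨hnextS n _ ih.1 ih.2, hnextφ n _ ih.1 ih.2⟩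
  obtain ⟨x, hx⟩ := cauchySeq_tendsto_of_complete <|
    cauchySeq_of_dist_le_of_summable δ (fun n => hnextδ n _ (hu n).1 (hu n).2) hδ
  have hxS : x ∈ S := hS.mem_of_tendsto hx (Eventually.of_forall fun n => (hu n).1)
  have hφu := (hφ x hxS).tendsto.comp
    (tendsto_nhdsWithin_iff.mpr ⟨hx, Eventually.of_forall fun n => (hu n).1⟩)
  exact ⟨x, hxS, le_of_tendsto_of_tendsto' hφu hε fun n => (hu n).2.le⟩

section PowerSeries

variable {K : Type*} [NontriviallyNormedField K] [IsUltrametricDist K] [CompleteSpace K]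
  {c : ℕ → K} {τ : ℝ} {D : ℕ}

theorem summable_mul_pow_of_tendsto (hlim : Tendsto (fun k => ‖c k‖ * τ ^ k) atTop (𝓝 0))
    {x : K} (hx : ‖x‖ ≤ τ) : Summable fun k => c k * x ^ k := by
  refine NonarchimedeanAddGroup.summable_of_tendsto_cofinite_zero ?_
  rw [Nat.cofinite_eq_atTop]
  exact squeeze_zero_norm (fun k => by rw [norm_mul, norm_pow]; gcongr) hlim

theorem norm_tsum_sub_eval_trunc_le (hlim : Tendsto (fun k => ‖c k‖ * τ ^ k) atTop (𝓝 0))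
    {x : K} (hx : ‖x‖ ≤ τ) {ε : ℝ} (hε : 0 ≤ ε) {N : ℕ} (hN : ∀ k, N ≤ k → ‖c k‖ * τ ^ k ≤ ε) :
    ‖∑' k, c k * x ^ k - (PowerSeries.trunc N (PowerSeries.mk c)).eval x‖ ≤ ε := by
  have heval :
      (PowerSeries.trunc N (PowerSeries.mk c)).eval x = ∑ k ∈ Finset.range N, c k * x ^ k := by
    simp [eval, PowerSeries.eval₂_trunc_eq_sum_range]
  rw [heval, ← (summable_mul_pow_of_tendsto hlim hx).sum_add_tsum_nat_add N, add_sub_cancel_left]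
  refine IsUltrametricDist.norm_tsum_le_of_forall_le_of_nonneg hε fun k => ?_
  calc ‖c (k + N) * x ^ (k + N)‖ ≤ ‖c (k + N)‖ * τ ^ (k + N) := by
        rw [norm_mul, norm_pow]; gcongr
    _ ≤ ε := hN _ (Nat.le_add_left N k)

theorem continuousOn_tsum_mul_pow (hlim : Tendsto (fun k => ‖c k‖ * τ ^ k) atTop (𝓝 0)) :
    ContinuousOn (fun x => ∑' k, c k * x ^ k) (Metric.closedBall 0 τ) := by
  have : TendstoUniformlyOn (fun N x => (PowerSeries.trunc N (PowerSeries.mk c)).eval x)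
      (fun x => ∑' k, c k * x ^ k) atTop (Metric.closedBall 0 τ) := by
    refine Metric.tendstoUniformlyOn_iff.mpr fun ε hε => ?_
    obtain ⟨N, hN⟩ := eventually_atTop.mp (hlim.eventually (ge_mem_nhds (half_pos hε)))
    filter_upwards [eventually_ge_atTop N] with n hn x hx
    rw [dist_eq_norm]
    refine (norm_tsum_sub_eval_trunc_le hlim (mem_closedBall_zero_iff.mp hx) (half_pos hε).le
      fun k hk => hN k (hn.trans hk)).trans_lt (half_lt_self hε)
  exact this.continuousOn (Frequently.of_forall fun N => (Polynomial.continuous _).continuousOn)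

theorem exists_polynomial_approx (hτ : 0 ≤ τ) (hc0 : ‖c 0‖ = 1) (hc : HasWeierstrassDegree c τ 1 D)
    (hlim : Tendsto (fun k => ‖c k‖ * τ ^ k) atTop (𝓝 0)) {ε : ℝ} (hε : 0 < ε) :
    ∃ Q : K[X], ‖Q.coeff 0‖ = 1 ∧ HasWeierstrassDegree Q.coeff τ 1 D ∧
      ∀ x : K, ‖x‖ ≤ τ → ‖∑' k, c k * x ^ k - Q.eval x‖ ≤ ε := by
  obtain ⟨N, hN⟩ :=
    eventually_atTop.mp ((hlim.eventually (ge_mem_nhds hε)).and (eventually_gt_atTop D))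
  have hDN := (hN N le_rfl).2
  refine ⟨PowerSeries.trunc N (PowerSeries.mk c), ?_, hc.trunc hτ hDN,
    fun x hx => norm_tsum_sub_eval_trunc_le hlim hx hε.le fun k hk => (hN k hk).1⟩
  rw [PowerSeries.coeff_trunc, if_pos (by omega), PowerSeries.coeff_mk, hc0]

variable [IsAlgClosed K]

theorem exists_norm_eq_norm_tsum_lt_one (hτ : 0 < τ) (hc0 : ‖c 0‖ = 1)
    (hc : HasWeierstrassDegree c τ 1 D) (hlim : Tendsto (fun k => ‖c k‖ * τ ^ k) atTop (𝓝 0))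
    (hD : 0 < D) : ∃ x : K, ‖x‖ = τ ∧ ‖∑' k, c k * x ^ k‖ < 1 := by
  set Q := PowerSeries.trunc (D + 1) (PowerSeries.mk c)
  have hQ := hc.trunc hτ.le D.lt_succ_self
  have hQ0 : ‖Q.coeff 0‖ = 1 := by
    rw [PowerSeries.coeff_trunc, if_pos D.succ_pos, PowerSeries.coeff_mk, hc0]
  have hdeg : Q.natDegree = D :=
    le_antisymm (Nat.lt_succ_iff.mp (PowerSeries.natDegree_trunc_lt _ D))
      (le_natDegree_of_ne_zero (hQ.ne_zero hτ.le))
  obtain ⟨x, hx, hxτ⟩ := exists_isRoot_norm_eq hτ hQ0 hQ hdeg hD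
  obtain ⟨η, hη1, hη⟩ := exists_lt_forall_le_of_tendsto hlim one_pos hc.lt
  have hη0 : 0 ≤ η := (by positivity : 0 ≤ ‖c (D + 1)‖ * τ ^ (D + 1)).trans (hη _ D.lt_succ_self)
  have := norm_tsum_sub_eval_trunc_le hlim hxτ.le hη0 (N := D + 1) hη
  rw [hx.eq_zero, sub_zero] at this
  exact ⟨x, hxτ, this.trans_lt hη1⟩

theorem exists_near_norm_tsum_lt (hτ : 0 < τ) (hc0 : ‖c 0‖ = 1)
    (hc : HasWeierstrassDegree c τ 1 D) (hlim : Tendsto (fun k => ‖c k‖ * τ ^ k) atTop (𝓝 0))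
    {x : K} (hx : ‖x‖ = τ) {ρ : ℝ} (hρ0 : 0 < ρ) (hρ1 : ρ ≤ 1)
    (hx_small : ‖∑' k, c k * x ^ k‖ < ρ ^ D) {ε : ℝ} (hε : 0 < ε) :
    ∃ y : K, ‖y‖ = τ ∧ ‖∑' k, c k * y ^ k‖ < ε ∧ ‖x - y‖ ≤ τ * ρ := by
  obtain ⟨Q, hQ0, hQ, happrox⟩ :=
    exists_polynomial_approx hτ.le hc0 hc hlim (ε := min (ε / 2) (ρ ^ D / 2)) (by positivity)
  have hQx : ‖Q.eval x‖ < ρ ^ D := calc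
    ‖Q.eval x‖ = ‖∑' k, c k * x ^ k + -(∑' k, c k * x ^ k - Q.eval x)‖ := by
        rw [neg_sub, add_sub_cancel]
    _ ≤ max ‖∑' k, c k * x ^ k‖ ‖∑' k, c k * x ^ k - Q.eval x‖ := by
        rw [← norm_neg (_ - _)]; exact IsUltrametricDist.norm_add_le_max _ _
    _ < ρ ^ D := max_lt hx_small <| (happrox x hx.le).trans_lt <|
        (min_le_right _ _).trans_lt (half_lt_self (by positivity))
  obtain ⟨y, hy, hyτ, hxy⟩ := exists_isRoot_norm_sub_le hτ hQ0 hQ hx.le hρ0.le hρ1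
    (hQx.trans_le (pow_le_one₀ hρ0.le hρ1)) hQx.le
  have := happrox y hyτ.le
  rw [hy.eq_zero, sub_zero] at this
  exact ⟨y, hyτ, this.trans_lt ((min_le_left _ _).trans_lt (half_lt_self hε)), hxy⟩

theorem exists_norm_eq_tsum_eq_zero (hτ : 0 < τ) (hc0 : ‖c 0‖ = 1)
    (hc : HasWeierstrassDegree c τ 1 D) (hlim : Tendsto (fun k => ‖c k‖ * τ ^ k) atTop (𝓝 0))
    (hD : 0 < D) : ∃ x : K, ‖x‖ = τ ∧ ∑' k, c k * x ^ k = 0 := by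
  obtain ⟨x₀, hx₀, h₀⟩ := exists_norm_eq_norm_tsum_lt_one hτ hc0 hc hlim hD
  have hε : Tendsto (fun n : ℕ => (((1 : ℝ) / 2) ^ n) ^ D) atTop (𝓝 0) := by
    simpa [zero_pow hD.ne'] using
      (tendsto_pow_atTop_nhds_zero_of_lt_one (by norm_num : (0 : ℝ) ≤ 1 / 2) (by norm_num)).pow D
  have hstep (n : ℕ) (x : K) (hx : x ∈ Metric.sphere 0 τ)
      (hGx : ‖∑' k, c k * x ^ k‖ < (((1 : ℝ) / 2) ^ n) ^ D) :
      ∃ y ∈ Metric.sphere 0 τ, ‖∑' k, c k * y ^ k‖ < (((1 : ℝ) / 2) ^ (n + 1)) ^ D ∧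
        dist x y ≤ τ * ((1 : ℝ) / 2) ^ n := by
    obtain ⟨y, hy, hGy, hxy⟩ := exists_near_norm_tsum_lt hτ hc0 hc hlim
      (mem_sphere_zero_iff_norm.mp hx) (by positivity) (pow_le_one₀ (by norm_num) (by norm_num))
      hGx (ε := (((1 : ℝ) / 2) ^ (n + 1)) ^ D) (by positivity)
    exact ⟨y, mem_sphere_zero_iff_norm.mpr hy, hGy, by rwa [dist_eq_norm]⟩
  obtain ⟨x, hx, hGx⟩ := exists_mem_le_zero_of_approx Metric.isClosed_sphere
    ((continuousOn_tsum_mul_pow hlim).norm.mono Metric.sphere_subset_closedBall) hε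
    (summable_geometric_two.mul_left τ) (mem_sphere_zero_iff_norm.mpr hx₀) (by simpa using h₀) hstep
  exact ⟨x, mem_sphere_zero_iff_norm.mp hx, norm_le_zero_iff.mp hGx⟩

theorem card_le_of_forall_tsum_eq_zero (hτ : 0 < τ) (hc0 : ‖c 0‖ = 1)
    (hc : HasWeierstrassDegree c τ 1 D) (hlim : Tendsto (fun k => ‖c k‖ * τ ^ k) atTop (𝓝 0))
    {T : Finset K} (hT : ∀ t ∈ T, ‖t‖ = τ ∧ ∑' k, c k * t ^ k = 0) : T.card ≤ D := by
  classical
  obtain ⟨δ, hδ0, hδ⟩ := exists_pos_forall_lt_dist T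
  set ρ := min 1 (δ / τ)
  have hρ0 : 0 < ρ := lt_min one_pos (div_pos hδ0 hτ)
  have hρ1 : ρ ≤ 1 := min_le_left _ _
  have hτρ : τ * ρ ≤ δ := (mul_le_mul_of_nonneg_left (min_le_right _ _) hτ.le).trans_eq
    (mul_div_cancel₀ δ hτ.ne')
  have hρD : ρ ^ D ≤ 1 := pow_le_one₀ hρ0.le hρ1
  have hρD0 : 0 < ρ ^ D := by positivity
  obtain ⟨Q, hQ0, hQ, happrox⟩ :=
    exists_polynomial_approx hτ.le hc0 hc hlim (ε := ρ ^ D / 2) (by positivity)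
  have hQne : Q ≠ 0 := fun h0 => hQ.ne_zero hτ.le (by simp [h0])
  set R := (Q.roots.filter (‖·‖ ≤ τ)).toFinset
  have hnear (t : K) (ht : t ∈ T) : ∃ r ∈ R, ‖t - r‖ ≤ τ * ρ := by
    have hQt : ‖Q.eval t‖ ≤ ρ ^ D / 2 := by simpa [(hT t ht).2] using happrox t (hT t ht).1.le
    obtain ⟨r, hr, hrτ, htr⟩ := exists_isRoot_norm_sub_le hτ hQ0 hQ (hT t ht).1.le hρ0.le hρ1
      (by linarith) (by linarith)
    refine ⟨r, Multiset.mem_toFinset.mpr (Multiset.mem_filter.mpr ?_), htr⟩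
    exact ⟨mem_roots'.mpr ⟨hQne, hr⟩, hrτ.le⟩
  choose! r hrR hr using hnear
  have hinj : Set.InjOn r T := fun t ht t' ht' htt' => by
    by_contra hne
    have : ‖t - t'‖ ≤ τ * ρ := calc
      ‖t - t'‖ = ‖(t - r t) + -(t' - r t')‖ := by rw [htt']; ring_nf
      _ ≤ max ‖t - r t‖ ‖-(t' - r t')‖ := IsUltrametricDist.norm_add_le_max _ _
      _ ≤ τ * ρ := max_le (hr t ht) (by rw [norm_neg]; exact hr t' ht')
    have := hδ t ht t' ht' hne
    rw [dist_eq_norm] at this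
    linarith
  calc T.card ≤ R.card := Finset.card_le_card_of_injOn r hrR hinj
    _ ≤ Multiset.card (Q.roots.filter (‖·‖ ≤ τ)) := Multiset.toFinset_card_le _
    _ ≤ D := card_roots_filter_le hτ hQ

end PowerSeries

theorem norm_eq_one_of_hasDerivAt {K E : Type*} [NontriviallyNormedField K] [NormedAddCommGroup E]
    [NormedSpace K E] {F : K → E} {L : E} {x : K} (hF : HasDerivAt F L x)
    (hiso : ∀ᶠ y in 𝓝 x, ‖F y - F x‖ = ‖y - x‖) : ‖L‖ = 1 := by
  have hslope : ∀ᶠ y in 𝓝[≠] x, 1 = ‖slope F x y‖ := by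
    filter_upwards [nhdsWithin_le_nhds hiso, self_mem_nhdsWithin] with y hy hyx
    rw [slope_def_module, norm_smul, hy, norm_inv,
      inv_mul_cancel₀ (norm_ne_zero_iff.mpr (sub_ne_zero.mpr hyx))]
  exact tendsto_nhds_unique ((hasDerivAt_iff_tendsto_slope.mp hF).norm)
    (tendsto_const_nhds.congr' hslope)

theorem exists_hasDerivAt_iterate_norm_eq_one {K : Type*} [NontriviallyNormedField K] {F : K → K}
    {U : Set K} (hU : IsOpen U)
    (hmaps : Set.MapsTo F U U) (hdiff : ∀ x ∈ U, DifferentiableAt K F x)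
    (hiso : ∀ u ∈ U, ∀ v ∈ U, ‖F u - F v‖ = ‖u - v‖) (n : ℕ) {x : K} (hx : x ∈ U) :
    ∃ L, HasDerivAt F^[n] L x ∧ ‖L‖ = 1 := by
  have hdiff_iter (m : ℕ) : ∀ y ∈ U, DifferentiableAt K F^[m] y := by
    induction m with
    | zero => exact fun y _ => differentiableAt_id
    | succ m ih =>
      intro y hy
      rw [Function.iterate_succ]
      exact (ih _ (hmaps hy)).comp y (hdiff y hy)
  have hiso_iter (m : ℕ) : ∀ u ∈ U, ∀ v ∈ U, ‖F^[m] u - F^[m] v‖ = ‖u - v‖ := by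
    induction m with
    | zero => simp
    | succ m ih =>
      intro u hu v hv
      rw [Function.iterate_succ_apply, Function.iterate_succ_apply, ih _ (hmaps hu) _ (hmaps hv),
        hiso u hu v hv]
  have hF := (hdiff_iter n x hx).hasDerivAt
  exact ⟨_, hF, norm_eq_one_of_hasDerivAt hF
    (eventually_of_mem (hU.mem_nhds hx) fun y hy => hiso_iter n y hy x hx)⟩

theorem exists_isPeriodicPt_of_card_le {α : Type*} {F : α → α} {Z : Set α} (hZ : Set.MapsTo F Z Z)
    {n : ℕ} (hcard : ∀ T : Finset α, ↑T ⊆ Z → T.card ≤ n) {x : α} (hx : x ∈ Z) :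
    ∃ y ∈ Z, ∃ κ, 0 < κ ∧ κ ≤ n ∧ Function.IsPeriodicPt F κ y := by
  classical
  have horbit (i : ℕ) : F^[i] x ∈ Z := hZ.iterate i hx
  have hnotinj : ¬ Set.InjOn (fun i => F^[i] x) (Finset.range (n + 1)) := fun hinj => by
    have := hcard ((Finset.range (n + 1)).image fun i => F^[i] x)
      (by simpa [Set.subset_def] using fun i _ => horbit i)
    rw [Finset.card_image_of_injOn hinj, Finset.card_range] at this
    omega
  obtain ⟨i, hi, j, hj, heq, hij⟩ : ∃ i ∈ Finset.range (n + 1), ∃ j ∈ Finset.range (n + 1),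
      F^[i] x = F^[j] x ∧ i ≠ j := by
    simpa [Set.InjOn] using hnotinj
  wlog hlt : i < j generalizing i j
  · exact this j hj i hi heq.symm hij.symm (by omega)
  refine ⟨F^[i] x, horbit i, j - i, by omega, by simp at hj; omega, ?_⟩
  rw [Function.IsPeriodicPt, Function.IsFixedPt, ← Function.iterate_add_apply,
    Nat.sub_add_cancel hlt.le, heq]

theorem differentiableAt_tsum_of_coeff_le {K : Type*} [NontriviallyNormedField K] [CompleteSpace K]
    {a : ℕ → K} {A : ℝ} (ha0 : a 0 = 0) (ha1 : a 1 = 0)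
    (hA : 0 < A) (ha : ∀ i, 2 ≤ i → ‖a i‖ ≤ A ^ (i - 1)) {x : K} (hx : ‖x‖ < 1 / A) :
    DifferentiableAt K (fun x => ∑' i, a i * x ^ i) x := by
  obtain ⟨r, hxr, hrA⟩ := exists_between hx
  lift r to NNReal using (norm_nonneg x).trans hxr.le
  have hAr : A * r ≤ 1 := by rw [mul_comm, ← le_div_iff₀ hA]; exact hrA.le
  set p := FormalMultilinearSeries.ofScalars K a
  have hrad : (r : ENNReal) ≤ p.radius := by
    refine p.le_radius_of_bound r fun n => ?_
    rw [FormalMultilinearSeries.ofScalars_norm]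
    match n with
    | 0 => simp [ha0]
    | 1 => simp [ha1]
    | i + 2 =>
      calc ‖a (i + 2)‖ * r ^ (i + 2) ≤ A ^ (i + 1) * r ^ (i + 2) := by
            gcongr; exact ha _ (by omega)
        _ = r * (A * r) ^ (i + 1) := by ring
        _ ≤ r := mul_le_of_le_one_right r.2 (pow_le_one₀ (by positivity) hAr)
  have hmem : x ∈ Metric.eball 0 p.radius := by
    refine Metric.mem_eball.mpr (lt_of_lt_of_le ?_ hrad)
    rw [edist_zero_right]
    exact_mod_cast hxr
  have hp : (fun x => ∑' i, a i * x ^ i) = p.sum := by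
    funext y
    simp [p, FormalMultilinearSeries.sum, mul_comm]
  rw [hp]
  exact (p.analyticOnNhd x hmem).differentiableAt

section PowerSeriesDynamics

variable {K : Type*} [NontriviallyNormedField K] [IsUltrametricDist K] {a : ℕ → K} {A : ℝ}

theorem norm_sub_eq_of_coeff_le {lam : K} (hlam : ‖lam‖ = 1) (ha0 : a 0 = 0) (ha1 : a 1 = 0)
    (hA : 0 < A) (ha : ∀ i, 2 ≤ i → ‖a i‖ ≤ A ^ (i - 1))
    (hsum : ∀ x : K, ‖x‖ < 1 / A → Summable fun i => a i * x ^ i) {u v : K} (hu : ‖u‖ < 1 / A)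
    (hv : ‖v‖ < 1 / A) :
    ‖(lam * u + ∑' i, a i * u ^ i) - (lam * v + ∑' i, a i * v ^ i)‖ = ‖u - v‖ := by
  rcases eq_or_ne u v with rfl | huv
  · simp
  set r := max ‖u‖ ‖v‖
  have hAr : A * r < 1 := by
    rw [mul_comm, ← lt_div_iff₀ hA]; exact max_lt hu hv
  have huv' : 0 < ‖u - v‖ := norm_pos_iff.mpr (sub_ne_zero.mpr huv)
  have hterm (i : ℕ) : ‖a i * u ^ i - a i * v ^ i‖ ≤ A * r * ‖u - v‖ := by
    rw [← mul_sub, norm_mul]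
    match i with
    | 0 => simp [ha0]; positivity
    | 1 => simp [ha1]; positivity
    | i + 2 =>
      calc ‖a (i + 2)‖ * ‖u ^ (i + 2) - v ^ (i + 2)‖ ≤ A ^ (i + 1) * (‖u - v‖ * r ^ (i + 1)) :=
            mul_le_mul (ha _ (by omega))
              (norm_pow_sub_pow_le_s18 (le_max_left _ _) (le_max_right _ _) _) (norm_nonneg _)
              (by positivity)
        _ = (A * r) ^ (i + 1) * ‖u - v‖ := by ring
        _ ≤ A * r * ‖u - v‖ := by
            gcongr
            exact pow_le_of_le_one (by positivity) hAr.le (by omega)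
  have htail : ‖∑' i, a i * u ^ i - ∑' i, a i * v ^ i‖ < ‖lam * (u - v)‖ := by
    rw [← (hsum u hu).tsum_sub (hsum v hv), norm_mul, hlam, one_mul]
    exact (IsUltrametricDist.norm_tsum_le_of_forall_le_of_nonneg (by positivity) hterm).trans_lt
      (mul_lt_of_lt_one_left huv' hAr)
  rw [show lam * u + ∑' i, a i * u ^ i - (lam * v + ∑' i, a i * v ^ i)
      = lam * (u - v) + (∑' i, a i * u ^ i - ∑' i, a i * v ^ i) by ring,
    IsUltrametricDist.norm_add_eq_max_of_norm_ne_norm htail.ne', max_eq_left htail.le, norm_mul,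
    hlam, one_mul]

theorem norm_eq_of_coeff_le {lam : K} (hlam : ‖lam‖ = 1) (ha0 : a 0 = 0) (ha1 : a 1 = 0)
    (hA : 0 < A) (ha : ∀ i, 2 ≤ i → ‖a i‖ ≤ A ^ (i - 1))
    (hsum : ∀ x : K, ‖x‖ < 1 / A → Summable fun i => a i * x ^ i) {x : K} (hx : ‖x‖ < 1 / A) :
    ‖lam * x + ∑' i, a i * x ^ i‖ = ‖x‖ := by
  have h0 (i : ℕ) : a i * 0 ^ i = 0 := by rcases i with _ | i <;> simp [ha0]
  simpa [h0] using norm_sub_eq_of_coeff_le hlam ha0 ha1 hA ha hsum hx (v := 0) (by simpa using hA)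

theorem exists_hasDerivAt_iterate_of_coeff_le [CompleteSpace K] {lam : K} (hlam : ‖lam‖ = 1)
    (ha0 : a 0 = 0) (ha1 : a 1 = 0) (hA : 0 < A) (ha : ∀ i, 2 ≤ i → ‖a i‖ ≤ A ^ (i - 1))
    (hsum : ∀ x : K, ‖x‖ < 1 / A → Summable fun i => a i * x ^ i) (n : ℕ) {x : K}
    (hx : ‖x‖ < 1 / A) :
    ∃ L, HasDerivAt (fun x => lam * x + ∑' i, a i * x ^ i)^[n] L x ∧ ‖L‖ = 1 := by
  refine exists_hasDerivAt_iterate_norm_eq_one Metric.isOpen_ball (fun y hy => ?_) (fun y hy => ?_)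
    (fun u hu v hv => ?_) n (mem_ball_zero_iff.mpr hx)
  · rw [mem_ball_zero_iff] at hy ⊢
    rwa [norm_eq_of_coeff_le hlam ha0 ha1 hA ha hsum hy]
  · exact (differentiableAt_id.const_mul lam).add
      (differentiableAt_tsum_of_coeff_le ha0 ha1 hA ha (mem_ball_zero_iff.mp hy))
  · exact norm_sub_eq_of_coeff_le hlam ha0 ha1 hA ha hsum (mem_ball_zero_iff.mp hu)
      (mem_ball_zero_iff.mp hv)

end PowerSeriesDynamics

theorem norm_le_pow_of_mem_upperBounds {K : Type*} [SeminormedAddGroup K] {a : ℕ → K} {A : ℝ}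
    (hA : A ∈ upperBounds (Set.range fun i : {i : ℕ // 2 ≤ i} =>
      ‖a (i : ℕ)‖ ^ ((1 : ℝ) / ((i : ℕ) - 1 : ℝ))))
    {i : ℕ} (hi : 2 ≤ i) : ‖a i‖ ≤ A ^ (i - 1) := by
  have h : ‖a i‖ ^ ((1 : ℝ) / ((i : ℝ) - 1)) ≤ A := hA ⟨⟨i, hi⟩, rfl⟩
  have hi' : (0 : ℝ) < (i : ℝ) - 1 := by
    have : (2 : ℝ) ≤ i := by exact_mod_cast hi
    linarith
  have hA0 : 0 ≤ A := (Real.rpow_nonneg (norm_nonneg _) _).trans h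
  rw [one_div, Real.rpow_inv_le_iff_of_pos (norm_nonneg _) hA0 hi'] at h
  rwa [← Real.rpow_natCast, Nat.cast_sub (by omega), Nat.cast_one]

theorem exists_norm_eq_of_norm_eq_pow {K : Type*} [NormedField K] [IsAlgClosed K] {β : K} {τ : ℝ}
    (hτ : 0 ≤ τ) {n : ℕ} (hn : n ≠ 0) (hβ : ‖β‖ = τ ^ n) : ∃ t : K, ‖t‖ = τ := by
  obtain ⟨t, ht⟩ := IsAlgClosed.exists_pow_nat_eq β (Nat.pos_of_ne_zero hn)
  exact ⟨t, (pow_left_inj₀ (norm_nonneg t) hτ hn).mp (by rw [← norm_pow, ht, hβ])⟩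

theorem tsum_mul_pow_eq_mul_tsum_succ {K : Type*} [NormedField K] {b : ℕ → K} (hb0 : b 0 = 0)
    {x : K} (hs : Summable fun k => b k * x ^ k) :
    ∑' k, b k * x ^ k = x * ∑' k, b (k + 1) * x ^ k := by
  rw [hs.tsum_eq_zero_add, hb0, zero_mul, zero_add, ← tsum_mul_left]
  exact tsum_congr fun k => by ring

theorem exists_zero_on_sphere_and_card_le {K : Type*} [NontriviallyNormedField K]
    [IsUltrametricDist K] [CompleteSpace K] [IsAlgClosed K] {b : ℕ → K} {τ : ℝ} {D : ℕ}
    (hτ : 0 < τ) (hb0 : b 0 = 0) (hb1 : b 1 = 1) (hb : HasWeierstrassDegree b τ τ (D + 1))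
    (hD : 0 < D) (hsum : ∀ x : K, ‖x‖ ≤ τ → Summable fun k => b k * x ^ k) :
    (∃ x : K, ‖x‖ = τ ∧ ∑' k, b k * x ^ k = 0) ∧
      ∀ T : Finset K, (∀ t ∈ T, ‖t‖ = τ ∧ ∑' k, b k * t ^ k = 0) → T.card ≤ D := by
  have hc : HasWeierstrassDegree (fun k => b (k + 1)) τ 1 D := by simpa [hτ.ne'] using hb.shift hτ
  have hc0 : ‖b (0 + 1)‖ = 1 := by simp [hb1]
  obtain ⟨t, ht⟩ := exists_norm_eq_of_norm_eq_pow hτ.le hD.ne' (β := (b (D + 1))⁻¹)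
    (by rw [norm_inv, inv_eq_iff_eq_inv, ← one_div, eq_div_iff (by positivity), hc.eq])
  have hlim : Tendsto (fun k => ‖b (k + 1)‖ * τ ^ k) atTop (𝓝 0) := by
    have := ((hsum t ht.le).tendsto_atTop_zero.norm.comp (tendsto_add_atTop_nat 1)).div_const τ
    simpa [norm_mul, norm_pow, ht, pow_succ, mul_div_assoc, hτ.ne'] using this
  have hzero (x : K) (hx : ‖x‖ = τ) :
      ∑' k, b k * x ^ k = 0 ↔ ∑' k, b (k + 1) * x ^ k = 0 := by
    rw [tsum_mul_pow_eq_mul_tsum_succ hb0 (hsum x hx.le), mul_eq_zero,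
      or_iff_right (norm_pos_iff.mp (hx ▸ hτ))]
  refine ⟨?_, fun T hT => card_le_of_forall_tsum_eq_zero hτ hc0 hc hlim fun x hx =>
    ⟨(hT x hx).1, (hzero x (hT x hx).1).mp (hT x hx).2⟩⟩
  obtain ⟨x, hx, hGx⟩ := exists_norm_eq_tsum_eq_zero hτ hc0 hc hlim hD
  exact ⟨x, hx, (hzero x hx).mpr hGx⟩

/-- Let `K` be a complete algebraically closed non-Archimedean valued field,
`f(x) = λx + ∑_{i ≥ 2} aᵢ xⁱ` with `‖λ‖ = 1` and `a = sup_{i ≥ 2} ‖aᵢ‖^{1/(i-1)}`, and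
suppose `f` is linearizable with conjugacy `g = x + ∑_{k ≥ 2} b_k xᵏ`.  Let `τ < 1/a` be
such that `g` has Weierstrass degree `1` on the open disc of radius `τ` and degree `d > 1`
on the closed disc of radius `τ` (expressed via the coefficients: `‖b_k‖τᵏ ≤ ‖b₁‖τ` for all
`k`, with the maximum attained at `k = d` and at no larger index).  Then `f` has a periodic
point `xhat` on the sphere `‖xhat‖ = τ` of period `κ ≤ d`, and `xhat` is indifferent:
`‖(f^κ)'(xhat)‖ = 1`. -/
theorem periodic_point_on_boundary {K : Type*} [NontriviallyNormedField K]
    [IsUltrametricDist K] [CompleteSpace K] [IsAlgClosed K]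
    (lam : K) (hlam : ‖lam‖ = 1)
    (a : ℕ → K) (ha0 : a 0 = 0) (ha1 : a 1 = 0)
    (A : ℝ)
    (hA : IsLUB (Set.range fun i : {i : ℕ // 2 ≤ i} =>
      ‖a (i : ℕ)‖ ^ ((1 : ℝ) / ((i : ℕ) - 1 : ℝ))) A)
    (f : K → K) (hf : ∀ x : K, f x = lam * x + ∑' i : ℕ, a i * x ^ i)
    (hfc : ∀ x : K, ‖x‖ < 1 / A → Summable fun i : ℕ => a i * x ^ i)
    (τ : ℝ) (hτ0 : 0 < τ) (hτA : τ < 1 / A)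
    (b : ℕ → K) (hb0 : b 0 = 0) (hb1 : b 1 = 1)
    (g : K → K) (hg : ∀ x : K, g x = ∑' k : ℕ, b k * x ^ k)
    (hgc : ∀ x : K, ‖x‖ ≤ τ → Summable fun k : ℕ => b k * x ^ k)
    (hconj : ∀ x : K, ‖x‖ ≤ τ → g (f x) = lam * g x)
    (d : ℕ) (hd1 : 1 < d)
    (hmax : ∀ k : ℕ, ‖b k‖ * τ ^ k ≤ ‖b 1‖ * τ)
    (hdeg : ‖b d‖ * τ ^ d = ‖b 1‖ * τ)
    (htop : ∀ k : ℕ, d < k → ‖b k‖ * τ ^ k < ‖b 1‖ * τ) :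
    ∃ xhat : K, ‖xhat‖ = τ ∧ ∃ κ : ℕ, 1 ≤ κ ∧ κ ≤ d ∧ f^[κ] xhat = xhat ∧
      ∃ L : K, HasDerivAt (f^[κ]) L xhat ∧ ‖L‖ = 1 := by
  have hA0 : 0 < A := one_div_pos.mp (hτ0.trans hτA)
  have ha (i : ℕ) (hi : 2 ≤ i) : ‖a i‖ ≤ A ^ (i - 1) := norm_le_pow_of_mem_upperBounds hA.1 hi
  obtain rfl : f = fun x => lam * x + ∑' i, a i * x ^ i := funext hf
  obtain ⟨D, rfl⟩ : ∃ D, d = D + 1 := ⟨d - 1, by omega⟩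
  obtain ⟨⟨x, hx, hgx⟩, hcard⟩ := exists_zero_on_sphere_and_card_le hτ0 hb0 hb1
    (by simpa [hb1] using HasWeierstrassDegree.mk hmax hdeg htop) (by omega) hgc
  set Z := {x : K | ‖x‖ = τ ∧ g x = 0}
  have hZ : Set.MapsTo (fun x => lam * x + ∑' i, a i * x ^ i) Z Z := fun x ⟨hx, hgx⟩ =>
    ⟨(norm_eq_of_coeff_le hlam ha0 ha1 hA0 ha hfc (hx ▸ hτA)).trans hx,
      by rw [hconj x hx.le, hgx, mul_zero]⟩
  obtain ⟨y, ⟨hy, -⟩, κ, hκ0, hκD, hper⟩ := exists_isPeriodicPt_of_card_le hZ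
    (fun T hT => hcard T fun t ht => ⟨(hT ht).1, (hg t).symm.trans (hT ht).2⟩)
    ⟨hx, (hg x).trans hgx⟩
  obtain ⟨L, hL, hL1⟩ :=
    exists_hasDerivAt_iterate_of_coeff_le hlam ha0 ha1 hA0 ha hfc κ (hy ▸ hτA)
  exact ⟨y, hy, κ, hκ0, by omega, hper, L, hL, hL1⟩
end
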